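/- arXiv:1203.2775 — 10 statements merged into one kernel-verified Lean document; each statement's English description precedes it below -/
import Mathlib

section
/- Let $L_1$ be the line graph on $\{i,j,k\}$ with edges $\{i,j\},\{j,k\}$ and $L_2$ the line graph on $\{r,s,t\}$ with edges $\{r,s\},\{s,t\}$. Let $I=(p_{e,f}: e\in E(L_1), f\in E(L_2))$ in the polynomial ring over a field in the nine variables $x_{ab}$, $a\in\{i,j,k\}$, $b\in\{r,s,t\}$. Then the polynomial $f=x_{it}x_{jr}x_{ks}-x_{ir}x_{js}x_{kt}$ satisfies $f\notin I$ but $f^2\in I$. -/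
/-!
The square of `f` is an explicit combination of the four minors. For `f ∉ I`, evaluate at a
point over a ring with nilpotents `s, t` (`s² = t² = 0`, `s t ≠ 0`) at which every minor vanishes
but `f` takes the value `s t`. Such a point cannot be found over a reduced ring, since `f` lies in
the radical of `I`.
-/

open MvPolynomial

section AdjacentMinors

variable {R : Type*} [CommRing R]

def adjacentMinors : Set (MvPolynomial (Fin 3 × Fin 3) R) :=
  {X (0,0) * X (1,1) - X (0,1) * X (1,0),
   X (0,1) * X (1,2) - X (0,2) * X (1,1),
   X (1,0) * X (2,1) - X (1,1) * X (2,0),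
   X (1,1) * X (2,2) - X (1,2) * X (2,1)}

noncomputable def threeCycleBinomial : MvPolynomial (Fin 3 × Fin 3) R :=
  X (0,2) * X (1,0) * X (2,1) - X (0,0) * X (1,1) * X (2,2)

theorem threeCycleBinomial_sq_mem_span_adjacentMinors :
    (threeCycleBinomial : MvPolynomial (Fin 3 × Fin 3) R) ^ 2 ∈ Ideal.span adjacentMinors := by
  have mem : ∀ (c g : MvPolynomial (Fin 3 × Fin 3) R), g ∈ adjacentMinors →
      c * g ∈ Ideal.span adjacentMinors :=
    fun c g hg => Ideal.mul_mem_left _ c (Ideal.subset_span hg)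
  have certificate : (threeCycleBinomial : MvPolynomial (Fin 3 × Fin 3) R) ^ 2
      = (X (0,0) * X (1,2) * X (2,1) * X (2,2) - X (0,2) * X (1,2) * X (2,0) * X (2,1)) *
          (X (0,0) * X (1,1) - X (0,1) * X (1,0))
        + (2 * X (0,0) * X (1,0) * X (2,1) * X (2,2) - X (0,0) * X (1,2) * X (2,0) * X (2,1)
            - X (0,2) * X (1,0) * X (2,0) * X (2,1)) *
          (X (0,1) * X (1,2) - X (0,2) * X (1,1))
        + (X (0,2) ^ 2 * X (1,0) * X (2,1) - X (0,0) * X (0,1) * X (1,2) * X (2,2)) *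
          (X (1,0) * X (2,1) - X (1,1) * X (2,0))
        + (X (0,0) ^ 2 * X (1,1) * X (2,2) - X (0,0) * X (0,1) * X (1,2) * X (2,0)) *
          (X (1,1) * X (2,2) - X (1,2) * X (2,1)) := by
    unfold threeCycleBinomial; ring
  rw [certificate]
  refine add_mem (add_mem (add_mem (mem _ _ ?_) (mem _ _ ?_)) (mem _ _ ?_)) (mem _ _ ?_) <;>
    simp [adjacentMinors]

variable {A : Type*} [CommRing A] [Algebra R A]

def nilpotentPoint (s t : A) : Fin 3 × Fin 3 → A :=
  fun p => ![![s, s, 1], ![s, s * t, t], ![1, t, s]] p.1 p.2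

theorem aeval_nilpotentPoint_eq_zero_of_mem_adjacentMinors {s t : A} (hs : s ^ 2 = 0)
    (ht : t ^ 2 = 0) {g : MvPolynomial (Fin 3 × Fin 3) R} (hg : g ∈ adjacentMinors) :
    aeval (nilpotentPoint s t) g = 0 := by
  simp only [adjacentMinors, Set.mem_insert_iff, Set.mem_singleton_iff] at hg
  rcases hg with rfl | rfl | rfl | rfl <;>
    simp only [map_sub, map_mul, aeval_X, nilpotentPoint, Matrix.cons_val', Matrix.cons_val,
      Matrix.cons_val_zero, Matrix.cons_val_one, Matrix.cons_val_fin_one, Fin.isValue]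
  · linear_combination (t - 1) * hs
  · ring
  · ring
  · linear_combination t * hs - ht

theorem aeval_nilpotentPoint_threeCycleBinomial {s : A} (hs : s ^ 2 = 0) (t : A) :
    aeval (nilpotentPoint s t) (threeCycleBinomial : MvPolynomial (Fin 3 × Fin 3) R) = s * t := by
  simp only [threeCycleBinomial, map_sub, map_mul, aeval_X, nilpotentPoint, Matrix.cons_val',
    Matrix.cons_val, Matrix.cons_val_zero, Matrix.cons_val_one, Matrix.cons_val_fin_one,
    Fin.isValue]
  linear_combination (-(s * t)) * hs

theorem threeCycleBinomial_notMem_span_of_sq_eq_zero {s t : A} (hs : s ^ 2 = 0) (ht : t ^ 2 = 0)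
    (hst : s * t ≠ 0) :
    (threeCycleBinomial : MvPolynomial (Fin 3 × Fin 3) R) ∉ Ideal.span adjacentMinors := by
  have hker : Ideal.span adjacentMinors ≤
      RingHom.ker (aeval (R := R) (nilpotentPoint s t)) :=
    Ideal.span_le.mpr fun g hg => aeval_nilpotentPoint_eq_zero_of_mem_adjacentMinors hs ht hg
  intro hf
  exact hst (by rw [← aeval_nilpotentPoint_threeCycleBinomial (R := R) hs t]; exact hker hf)

end AdjacentMinors

theorem DualNumber.exists_sq_eq_zero_mul_ne_zero (R : Type*) [CommRing R] [Nontrivial R] :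
    ∃ s t : DualNumber (DualNumber R), s ^ 2 = 0 ∧ t ^ 2 = 0 ∧ s * t ≠ 0 := by
  refine ⟨TrivSqZeroExt.inl DualNumber.eps, DualNumber.eps, ?_, ?_, fun h => ?_⟩
  · rw [sq, ← TrivSqZeroExt.inl_mul, DualNumber.eps_mul_eps, TrivSqZeroExt.inl_zero]
  · rw [sq, DualNumber.eps_mul_eps]
  · have h' := congrArg (fun x => x.snd.snd) h
    simp at h'

/-- For the pair of line graphs of length 2 (on vertex sets `{i,j,k}` and `{r,s,t}`,
realized as `Fin 3` with the middle vertex `1`), the ideal `I` generated by the four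
adjacent 2-minors does not contain `f = x_{it}x_{jr}x_{ks} - x_{ir}x_{js}x_{kt}`,
but contains `f^2`. -/
theorem stmt1 (K : Type) [Field K] :
    (X (0,2) * X (1,0) * X (2,1) - X (0,0) * X (1,1) * X (2,2) :
        MvPolynomial (Fin 3 × Fin 3) K) ∉
      Ideal.span ({X (0,0) * X (1,1) - X (0,1) * X (1,0),
                   X (0,1) * X (1,2) - X (0,2) * X (1,1),
                   X (1,0) * X (2,1) - X (1,1) * X (2,0),
                   X (1,1) * X (2,2) - X (1,2) * X (2,1)} :
        Set (MvPolynomial (Fin 3 × Fin 3) K)) ∧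
    (X (0,2) * X (1,0) * X (2,1) - X (0,0) * X (1,1) * X (2,2) :
        MvPolynomial (Fin 3 × Fin 3) K) ^ 2 ∈
      Ideal.span ({X (0,0) * X (1,1) - X (0,1) * X (1,0),
                   X (0,1) * X (1,2) - X (0,2) * X (1,1),
                   X (1,0) * X (2,1) - X (1,1) * X (2,0),
                   X (1,1) * X (2,2) - X (1,2) * X (2,1)} :
        Set (MvPolynomial (Fin 3 × Fin 3) K)) := by
  obtain ⟨s, t, hs, ht, hst⟩ := DualNumber.exists_sq_eq_zero_mul_ne_zero K
  exact ⟨threeCycleBinomial_notMem_span_of_sq_eq_zero (A := DualNumber (DualNumber K)) hs ht hst,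
    threeCycleBinomial_sq_mem_span_adjacentMinors⟩
end

section
/- If neither $G_1$ nor $G_2$ is a complete graph (and both are connected with at least 3 vertices so that each contains an induced path of length 2), then the binomial edge ideal $J_{G_1,G_2}$ is not a radical ideal. -/
/-!
Choose induced paths `a - b - c` in `G₁` and `d - e - f` in `G₂` and put
`g = x_{be} (x_{ad} x_{cf} - x_{af} x_{cd})`. A combination of the four generators given by the
edges `ab, bc` and `de, ef` shows `x_{be}² (x_{ad} x_{cf} - x_{af} x_{cd}) ∈ J`, hence `g² ∈ J`.
On the other hand `g ∉ J`: over `K[s,t]/(s², t²)` take the point which vanishes outside the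
rows `a, b, c` and columns `d, e, f` and is `[[0, s, 1], [s, st, t], [1, t, 0]]` on them. An edge
minor of `J` meeting a zero row or column vanishes there, and since `ac` and `df` are not edges
the remaining ones are the four minors on the edges of the paths, which vanish because
`s² = t² = 0`. But `g` takes the value `-st ≠ 0`.
-/

open MvPolynomial

/-- The binomial edge ideal of a pair of graphs. -/
noncomputable def pairIdeal (K : Type) [Field K] {α β : Type}
    (G1 : SimpleGraph α) (G2 : SimpleGraph β) : Ideal (MvPolynomial (α × β) K) :=
  Ideal.span {p | ∃ i j k l, G1.Adj i j ∧ G2.Adj k l ∧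
    p = X (i, k) * X (j, l) - X (i, l) * X (j, k)}

namespace SimpleGraph

variable {V : Type*} {G : SimpleGraph V}

structure IsInducedP3 (G : SimpleGraph V) (a b c : V) : Prop where
  adj_left : G.Adj a b
  adj_right : G.Adj b c
  not_adj : ¬ G.Adj a c
  ne : a ≠ c

theorem Connected.exists_isInducedP3 (hc : G.Connected) (h : G ≠ ⊤) :
    ∃ a b c, G.IsInducedP3 a b c := by
  obtain ⟨u, w, hne, hnadj⟩ := ne_top_iff_exists_not_adj.mp h
  obtain ⟨p, hp⟩ := hc.exists_walk_length_eq_dist u w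
  obtain ⟨a, b, c, hab, hbc, hac, hne'⟩ :=
    p.exists_adj_adj_not_adj_ne hp (hc.one_lt_dist_of_ne_of_not_adj hne hnadj)
  exact ⟨a, b, c, ⟨hab, hbc, hac, hne'⟩⟩

theorem IsInducedP3.adj_cases {a b c i j : V} (hp : G.IsInducedP3 a b c) (hij : G.Adj i j) :
    (i ≠ a ∧ i ≠ b ∧ i ≠ c) ∨ (j ≠ a ∧ j ≠ b ∧ j ≠ c) ∨
      (i = a ∧ j = b) ∨ (i = b ∧ j = a) ∨ (i = b ∧ j = c) ∨ (i = c ∧ j = b) := by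
  have := hp.not_adj
  have := hij.ne
  have := hij.symm
  grind

end SimpleGraph

theorem DualNumber.inl_eps_mul_eps_ne_zero (R : Type*) [CommRing R] [Nontrivial R] :
    (TrivSqZeroExt.inl DualNumber.eps : DualNumber (DualNumber R)) * DualNumber.eps ≠ 0 := by
  intro h
  simpa using congrArg (fun x => (TrivSqZeroExt.snd x).snd) h

section TwoMinor

variable {α β R : Type*} [CommRing R]

def twoMinor (v : α × β → R) (i j : α) (k l : β) : R :=
  v (i, k) * v (j, l) - v (i, l) * v (j, k)

variable {v : α × β → R}

theorem twoMinor_eq_zero_of_row_left {i : α} (hi : ∀ k, v (i, k) = 0) (j : α) (k l : β) :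
    twoMinor v i j k l = 0 := by
  simp [twoMinor, hi]

theorem twoMinor_eq_zero_of_row_right {j : α} (hj : ∀ k, v (j, k) = 0) (i : α) (k l : β) :
    twoMinor v i j k l = 0 := by
  simp [twoMinor, hj]

theorem twoMinor_eq_zero_of_col_left {k : β} (hk : ∀ i, v (i, k) = 0) (i j : α) (l : β) :
    twoMinor v i j k l = 0 := by
  simp [twoMinor, hk]

theorem twoMinor_eq_zero_of_col_right {l : β} (hl : ∀ i, v (i, l) = 0) (i j : α) (k : β) :
    twoMinor v i j k l = 0 := by
  simp [twoMinor, hl]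

end TwoMinor

section PathWitness

variable {α β R : Type*} [CommRing R] [DecidableEq α] [DecidableEq β]

def pathWitness (a b c : α) (d e f : β) (s t : R) : α × β → R := fun ⟨i, k⟩ =>
  if i = a then (if k = e then s else if k = f then 1 else 0)
  else if i = b then (if k = d then s else if k = e then s * t else if k = f then t else 0)
  else if i = c then (if k = d then 1 else if k = e then t else 0)
  else 0

theorem pathWitness_row_eq_zero {a b c i : α} (d e f : β) (s t : R)
    (ha : i ≠ a) (hb : i ≠ b) (hc : i ≠ c) (k : β) :
    pathWitness a b c d e f s t (i, k) = 0 := by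
  simp [pathWitness, ha, hb, hc]

theorem pathWitness_col_eq_zero (a b c : α) {d e f k : β} (s t : R)
    (hd : k ≠ d) (he : k ≠ e) (hf : k ≠ f) (i : α) :
    pathWitness a b c d e f s t (i, k) = 0 := by
  simp only [pathWitness, hd, he, hf, if_false]
  split_ifs <;> rfl

theorem twoMinor_pathWitness_eq_zero {G₁ : SimpleGraph α} {G₂ : SimpleGraph β}
    {a b c : α} {d e f : β} {s t : R} (hs : s * s = 0) (ht : t * t = 0)
    (h₁ : G₁.IsInducedP3 a b c) (h₂ : G₂.IsInducedP3 d e f)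
    {i j : α} {k l : β} (hij : G₁.Adj i j) (hkl : G₂.Adj k l) :
    twoMinor (pathWitness a b c d e f s t) i j k l = 0 := by
  have ⟨hab, hbc, _, hac⟩ := h₁
  have ⟨hde, hef, _, hdf⟩ := h₂
  have := hab.ne; have := hab.ne'; have := hbc.ne; have := hbc.ne'; have := hac.symm
  have := hde.ne; have := hde.ne'; have := hef.ne; have := hef.ne'; have := hdf.symm
  rcases h₁.adj_cases hij with ⟨ha, hb, hc⟩ | ⟨ha, hb, hc⟩ | hrow | hrow | hrow | hrow
  · exact twoMinor_eq_zero_of_row_left (pathWitness_row_eq_zero d e f s t ha hb hc) j k l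
  · exact twoMinor_eq_zero_of_row_right (pathWitness_row_eq_zero d e f s t ha hb hc) i k l
  all_goals
    obtain ⟨rfl, rfl⟩ := hrow
    rcases h₂.adj_cases hkl with ⟨hd, he, hf⟩ | ⟨hd, he, hf⟩ | hcol | hcol | hcol | hcol
    · exact twoMinor_eq_zero_of_col_left (pathWitness_col_eq_zero _ _ _ s t hd he hf) _ _ l
    · exact twoMinor_eq_zero_of_col_right (pathWitness_col_eq_zero _ _ _ s t hd he hf) _ _ k
    all_goals
      obtain ⟨rfl, rfl⟩ := hcol
      simp [twoMinor, pathWitness, *, mul_comm]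

end PathWitness

section PairIdeal

variable (K : Type) [Field K] {α β : Type} {G₁ : SimpleGraph α} {G₂ : SimpleGraph β}

theorem twoMinor_X_mem_pairIdeal {i j : α} {k l : β} (hij : G₁.Adj i j) (hkl : G₂.Adj k l) :
    twoMinor X i j k l ∈ pairIdeal K G₁ G₂ :=
  Ideal.subset_span ⟨i, j, k, l, hij, hkl, rfl⟩

theorem aeval_twoMinor_X {R : Type*} [CommRing R] [Algebra K R] (v : α × β → R)
    (i j : α) (k l : β) :
    aeval v (twoMinor (X : α × β → MvPolynomial (α × β) K) i j k l) = twoMinor v i j k l := by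
  simp [twoMinor]

theorem pairIdeal_le_ker_aeval {R : Type*} [CommRing R] [Algebra K R] {v : α × β → R}
    (hv : ∀ i j k l, G₁.Adj i j → G₂.Adj k l → twoMinor v i j k l = 0) :
    pairIdeal K G₁ G₂ ≤ RingHom.ker (aeval v) := by
  rw [pairIdeal, Ideal.span_le]
  rintro _ ⟨i, j, k, l, hij, hkl, rfl⟩
  exact (aeval_twoMinor_X K v i j k l).trans (hv i j k l hij hkl)

theorem X_sq_mul_twoMinor_X_mem_pairIdeal {a b c : α} {d e f : β}
    (hab : G₁.Adj a b) (hbc : G₁.Adj b c) (hde : G₂.Adj d e) (hef : G₂.Adj e f) :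
    X (b, e) ^ 2 * twoMinor X a c d f ∈ pairIdeal K G₁ G₂ := by
  have key : X (b, e) ^ 2 * twoMinor (X : α × β → MvPolynomial (α × β) K) a c d f =
      X (b, e) * X (c, f) * twoMinor X a b d e + X (b, d) * X (c, e) * twoMinor X a b e f +
        X (a, f) * X (b, e) * twoMinor X b c d e + X (a, e) * X (b, d) * twoMinor X b c e f := by
    simp only [twoMinor]
    ring
  rw [key]
  refine add_mem (add_mem (add_mem ?_ ?_) ?_) ?_ <;>
    exact Ideal.mul_mem_left _ _ (twoMinor_X_mem_pairIdeal K ‹_› ‹_›)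

theorem X_mul_twoMinor_X_notMem_pairIdeal {a b c : α} {d e f : β}
    (h₁ : G₁.IsInducedP3 a b c) (h₂ : G₂.IsInducedP3 d e f) :
    X (b, e) * twoMinor X a c d f ∉ pairIdeal K G₁ G₂ := by
  classical
  let s : DualNumber (DualNumber K) := TrivSqZeroExt.inl DualNumber.eps
  let t : DualNumber (DualNumber K) := DualNumber.eps
  have hs : s * s = 0 := by
    rw [← TrivSqZeroExt.inl_mul, DualNumber.eps_mul_eps, TrivSqZeroExt.inl_zero]
  have ht : t * t = 0 := DualNumber.eps_mul_eps
  intro hmem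
  have hzero := pairIdeal_le_ker_aeval K
    (fun _ _ _ _ ↦ twoMinor_pathWitness_eq_zero (R := DualNumber (DualNumber K)) hs ht h₁ h₂) hmem
  have ⟨hab, hbc, _, hac⟩ := h₁
  have ⟨hde, hef, _, hdf⟩ := h₂
  rw [RingHom.mem_ker] at hzero
  simp [twoMinor, pathWitness, hab.ne', hbc.ne', hac.symm, hde.ne, hde.ne', hef.ne', hdf,
    hdf.symm] at hzero
  exact DualNumber.inl_eps_mul_eps_ne_zero K hzero

end PairIdeal

theorem stmt2_general (K : Type) [Field K] (m n : ℕ)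
    (G1 : SimpleGraph (Fin m)) (G2 : SimpleGraph (Fin n))
    (h1c : G1.Connected) (h2c : G2.Connected)
    (h1 : G1 ≠ ⊤) (h2 : G2 ≠ ⊤) :
    ¬ (pairIdeal K G1 G2).IsRadical := by
  obtain ⟨a, b, c, hp₁⟩ := h1c.exists_isInducedP3 h1
  obtain ⟨d, e, f, hp₂⟩ := h2c.exists_isInducedP3 h2
  intro hrad
  apply X_mul_twoMinor_X_notMem_pairIdeal K hp₁ hp₂
  refine hrad ⟨2, ?_⟩
  rw [show (X (b, e) * twoMinor X a c d f) ^ 2 =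
      twoMinor X a c d f * (X (b, e) ^ 2 * twoMinor X a c d f) by ring]
  exact Ideal.mul_mem_left _ _ (X_sq_mul_twoMinor_X_mem_pairIdeal K hp₁.adj_left
    hp₁.adj_right hp₂.adj_left hp₂.adj_right)

/-- If neither `G₁` nor `G₂` is complete (both connected with at least 3 vertices),
then `J_{G₁,G₂}` is not a radical ideal. -/
theorem stmt2 (K : Type) [Field K] (m n : ℕ) (hm : 3 ≤ m) (hn : 3 ≤ n)
    (G1 : SimpleGraph (Fin m)) (G2 : SimpleGraph (Fin n))
    (h1c : G1.Connected) (h2c : G2.Connected)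
    (h1 : G1 ≠ ⊤) (h2 : G2 ≠ ⊤) :
    ¬ (pairIdeal K G1 G2).IsRadical :=
  stmt2_general K m n G1 G2 h1c h2c h1 h2
end

section
/- Let $G_1,G_2$ be connected graphs on $[m]$ and $[n]$ respectively, $X=(x_{ij})$ an $m\times n$ matrix of indeterminates over a field $K$, and $x=\prod_{i,j}x_{ij}$. Then the saturation $J_{G_1,G_2}:x^\infty$ equals $I_2(X)$, the ideal of all $2\times 2$ minors of $X$. -/
/-
Saturation contains `I₂(X)`: writing `[ij|kl]` for a minor, the relation
`x_{tk} [ij|kl] = x_{ik} [tj|kl] + x_{jk} [it|kl]` shows that, once the variables are inverted,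
`[ij|kl]` is generated by `[tj|kl]` and `[it|kl]`. Walking along `G₁` from `i` to `j` therefore
produces every minor whose columns form an edge of `G₂`, and the analogous relation for
columns, walking along `G₂`, produces all the others.

Saturation is contained in `I₂(X)`: `J_{G₁,G₂} ⊆ I₂(X)`, and `I₂(X)` is the kernel of the Segre
map `x_{ij} ↦ s_i t_j` into a domain, hence prime, and does not contain `x`. The kernel of the
Segre map is spanned by binomials `x^a - x^b` whose exponent matrices have the same row and
column sums, and such a binomial is reduced to zero by swaps `x_{ik} x_{jl} ↦ x_{il} x_{jk}`,
each of which changes it by a multiple of a minor.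
-/

open MvPolynomial

/-- The ideal of all 2×2 minors of the generic matrix. -/
noncomputable def minors2 (K : Type) [Field K] (α β : Type) : Ideal (MvPolynomial (α × β) K) :=
  Ideal.span {p | ∃ i j k l, i ≠ j ∧ k ≠ l ∧
    p = X (i, k) * X (j, l) - X (i, l) * X (j, k)}

theorem Finset.exists_lt_of_sum_eq_of_lt {ι M : Type*} [AddCommMonoid M] [LinearOrder M]
    [IsOrderedCancelAddMonoid M] {s : Finset ι} {f g : ι → M}
    (h : ∑ i ∈ s, f i = ∑ i ∈ s, g i) {i : ι} (hi : i ∈ s) (hlt : g i < f i) :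
    ∃ j ∈ s, f j < g j := by
  by_contra! hle
  exact (Finset.sum_lt_sum hle ⟨i, hi, hlt⟩).ne h.symm

namespace Ideal

variable {R : Type*} [CommSemiring R]

def saturation (I : Ideal R) (x : R) : Ideal R where
  carrier := {f | ∃ N : ℕ, x ^ N * f ∈ I}
  zero_mem' := ⟨0, by simp⟩
  add_mem' := by
    rintro f g ⟨M, hM⟩ ⟨N, hN⟩
    refine ⟨M + N, ?_⟩
    rw [show x ^ (M + N) * (f + g) = x ^ N * (x ^ M * f) + x ^ M * (x ^ N * g) by ring]
    exact I.add_mem (I.mul_mem_left _ hM) (I.mul_mem_left _ hN)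
  smul_mem' := by
    rintro c f ⟨N, hN⟩
    exact ⟨N, by rw [smul_eq_mul, mul_left_comm]; exact I.mul_mem_left _ hN⟩

variable {I : Ideal R} {x f : R}

theorem le_saturation : I ≤ I.saturation x := fun f hf => ⟨0, by simpa using hf⟩

theorem mem_saturation_of_dvd_of_mul_mem {a : R} (ha : a ∣ x) (h : a * f ∈ I.saturation x) :
    f ∈ I.saturation x := by
  obtain ⟨c, rfl⟩ := ha
  obtain ⟨N, hN⟩ := h
  refine ⟨N + 1, ?_⟩
  rw [show (a * c) ^ (N + 1) * f = c * ((a * c) ^ N * (a * f)) by ring]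
  exact I.mul_mem_left _ hN

end Ideal

noncomputable def minor {α β R : Type*} [CommRing R] (i j : α) (k l : β) :
    MvPolynomial (α × β) R :=
  X (i, k) * X (j, l) - X (i, l) * X (j, k)

section Margins

variable {α β : Type*} [Fintype α] [Fintype β]

noncomputable def margins : (α × β →₀ ℕ) →+ (α ⊕ β →₀ ℕ) where
  toFun a := Finsupp.equivFunOnFinite.symm
    (Sum.elim (fun i => ∑ j, a (i, j)) (fun j => ∑ i, a (i, j)))
  map_zero' := by ext (i | j) <;> simp
  map_add' a b := by ext (i | j) <;> simp [Finset.sum_add_distrib]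

@[simp] lemma margins_inl (a : α × β →₀ ℕ) (i : α) :
    margins a (Sum.inl i) = ∑ j, a (i, j) := by simp [margins]

@[simp] lemma margins_inr (a : α × β →₀ ℕ) (j : β) :
    margins a (Sum.inr j) = ∑ i, a (i, j) := by simp [margins]

lemma margins_single (p : α × β) :
    margins (Finsupp.single p 1) =
      Finsupp.single (Sum.inl p.1) 1 + Finsupp.single (Sum.inr p.2) 1 := by
  classical
  obtain ⟨i, j⟩ := p
  ext (i' | j') <;> simp [Finsupp.single_apply, ite_and, eq_comm]

lemma margins_swap (i j : α) (k l : β) :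
    margins (Finsupp.single (i, l) 1 + Finsupp.single (j, k) 1) =
      margins (Finsupp.single (i, k) 1 + Finsupp.single (j, l) 1) := by
  simp only [map_add, margins_single]
  abel

variable {a b : α × β →₀ ℕ}

lemma exists_lt_in_column_of_margins_eq (h : margins a = margins b) {i : α} {k : β}
    (hik : b (i, k) < a (i, k)) : ∃ j, a (j, k) < b (j, k) := by
  have hcol : ∑ j, a (j, k) = ∑ j, b (j, k) := by simpa using congr($h (Sum.inr k))
  simpa using Finset.exists_lt_of_sum_eq_of_lt hcol (Finset.mem_univ i) hik

lemma exists_lt_in_row_of_margins_eq (h : margins a = margins b) {i : α} {k : β}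
    (hik : b (i, k) < a (i, k)) : ∃ l, a (i, l) < b (i, l) := by
  have hrow : ∑ l, a (i, l) = ∑ l, b (i, l) := by simpa using congr($h (Sum.inl i))
  simpa using Finset.exists_lt_of_sum_eq_of_lt hrow (Finset.mem_univ k) hik

lemma exists_lt_of_margins_eq (h : margins a = margins b) (hab : a ≠ b) : ∃ p, a p < b p := by
  obtain ⟨p, hne⟩ := Finsupp.ne_iff.mp hab
  obtain hlt | hgt := hne.lt_or_gt
  · exact ⟨p, hlt⟩
  · obtain ⟨j, hj⟩ := exists_lt_in_column_of_margins_eq h hgt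
    exact ⟨_, hj⟩

lemma exists_swap_of_margins_eq (h : margins a = margins b) (hab : a ≠ b) :
    ∃ (i j : α) (k l : β) (c : α × β →₀ ℕ), i ≠ j ∧ k ≠ l ∧
      a = c + (Finsupp.single (i, k) 1 + Finsupp.single (j, l) 1) ∧
      ∑ p, (b p - (c + (Finsupp.single (i, l) 1 + Finsupp.single (j, k) 1) : α × β →₀ ℕ) p) <
        ∑ p, (b p - a p) := by
  classical
  obtain ⟨⟨j, k⟩, hjk⟩ := exists_lt_of_margins_eq h hab
  obtain ⟨l, hjl⟩ := exists_lt_in_row_of_margins_eq h.symm hjk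
  obtain ⟨i, hik⟩ := exists_lt_in_column_of_margins_eq h.symm hjk
  have hij : i ≠ j := by rintro rfl; omega
  have hkl : k ≠ l := by rintro rfl; omega
  set e := Finsupp.single (i, k) 1 + Finsupp.single (j, l) 1 with he
  have he_apply : ∀ p, e p = (if p = (i, k) then 1 else 0) + (if p = (j, l) then 1 else 0) := by
    intro p; simp [he, Finsupp.single_apply, eq_comm]
  obtain ⟨c, rfl⟩ : ∃ c, a = c + e := by
    refine le_iff_exists_add'.mp (Finsupp.le_def.mpr fun p => ?_)
    rw [he_apply]
    split_ifs with h1 h2 h2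
    · simp [h1, hij] at h2
    · subst h1; omega
    · subst h2; omega
    · omega
  refine ⟨i, j, k, l, c, hij, hkl, rfl, ?_⟩
  -- The swap `(i, k), (j, l) ↦ (i, l), (j, k)` raises the exponent at `(j, k)`, where it is
  -- below `b`, and lowers it only at `(i, k)` and `(j, l)`, where it is above `b`.
  refine Finset.sum_lt_sum (fun p _ => ?_) ⟨(j, k), Finset.mem_univ _, ?_⟩
  · simp only [Finsupp.add_apply] at hik hjl ⊢
    by_cases h1 : p = (i, k)
    · subst h1; simp [he_apply, hij, hkl] at hik ⊢; omega
    by_cases h2 : p = (j, l)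
    · subst h2; simp [he_apply, hij.symm, hkl.symm] at hjl ⊢; omega
    simp only [he_apply, h1, h2, if_false]
    omega
  · simp [he_apply, hkl, hij.symm] at hjk ⊢
    omega

end Margins

section Segre

variable {α β : Type*} [Fintype α] [Fintype β] (R : Type*) [CommSemiring R]

noncomputable def segre : MvPolynomial (α × β) R →ₐ[R] MvPolynomial (α ⊕ β) R :=
  AddMonoidAlgebra.mapDomainAlgHom R R margins

variable {R}

@[simp] lemma segre_monomial (a : α × β →₀ ℕ) (r : R) :
    segre R (monomial a r) = monomial (margins a) r := by
  simp [segre, ← single_eq_monomial]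

lemma segre_X (p : α × β) : segre R (X p) = X (Sum.inl p.1) * X (Sum.inr p.2) := by
  simp [X, margins_single, monomial_mul]

end Segre

section Minors

variable {K : Type} [Field K] {α β : Type}

lemma minor_mem_minors2 {i j : α} {k l : β} (hij : i ≠ j) (hkl : k ≠ l) :
    minor i j k l ∈ minors2 K α β :=
  Ideal.subset_span ⟨i, j, k, l, hij, hkl, rfl⟩

theorem pairIdeal_le_minors2 {G1 : SimpleGraph α} {G2 : SimpleGraph β} :
    pairIdeal K G1 G2 ≤ minors2 K α β :=
  Ideal.span_le.mpr fun _ ⟨i, j, k, l, hij, hkl, hp⟩ =>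
    Ideal.subset_span ⟨i, j, k, l, hij.ne, hkl.ne, hp⟩

variable [Fintype α] [Fintype β]

theorem monomial_sub_monomial_mem_minors2 {a b : α × β →₀ ℕ} (h : margins a = margins b) :
    monomial a (1 : K) - monomial b 1 ∈ minors2 K α β := by
  induction hD : ∑ p, (b p - a p) using Nat.strong_induction_on generalizing a with
  | _ D IH =>
  obtain rfl | hab := eq_or_ne a b
  · simp
  obtain ⟨i, j, k, l, c, hij, hkl, rfl, hlt⟩ := exists_swap_of_margins_eq h hab
  have hmargins : margins (c + (Finsupp.single (i, l) 1 + Finsupp.single (j, k) 1)) =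
      margins b := by
    rw [map_add, margins_swap, ← map_add, h]
  have hdecomp : monomial (c + (Finsupp.single (i, k) 1 + Finsupp.single (j, l) 1)) (1 : K) -
      monomial b 1 = monomial c 1 * minor i j k l +
        (monomial (c + (Finsupp.single (i, l) 1 + Finsupp.single (j, k) 1)) 1 - monomial b 1) := by
    simp only [minor, X, monomial_mul, mul_sub, mul_one]
    ring
  rw [hdecomp]
  exact add_mem (Ideal.mul_mem_left _ _ (minor_mem_minors2 hij hkl))
    (IH _ (hD ▸ hlt) hmargins rfl)

theorem ker_segre_le_minors2 :
    RingHom.ker (segre K : MvPolynomial (α × β) K →ₐ[K] _) ≤ minors2 K α β := by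
  set r := Function.invFun (margins : (α × β →₀ ℕ) → (α ⊕ β →₀ ℕ))
  have hr : ∀ a, margins (r (margins a)) = margins a := fun a => Function.invFun_eq ⟨a, rfl⟩
  -- `r` picks one exponent in each fibre of `margins`, so `f` and its image under
  -- `mapDomain r ∘ segre` differ by a combination of binomials with equal margins.
  have key : ∀ f, f - AddMonoidAlgebra.mapDomain r (segre K f) ∈ minors2 K α β := by
    intro f
    induction f using MvPolynomial.induction_on' with
    | monomial a c =>
      rw [segre_monomial, ← single_eq_monomial (margins a), AddMonoidAlgebra.mapDomain_single,
        single_eq_monomial]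
      have hC : monomial a c - monomial (r (margins a)) c =
          C c * (monomial a 1 - monomial (r (margins a)) 1) := by
        rw [mul_sub, C_mul_monomial, C_mul_monomial, mul_one]
      rw [hC]
      exact Ideal.mul_mem_left _ _ (monomial_sub_monomial_mem_minors2 (hr a).symm)
    | add f g hf hg =>
      rw [map_add, AddMonoidAlgebra.mapDomain_add]
      convert add_mem hf hg using 1
      abel
  intro f hf
  simpa [RingHom.mem_ker.mp hf] using key f

theorem minors2_le_ker_segre : minors2 K α β ≤ RingHom.ker (segre K) := by
  refine Ideal.span_le.mpr ?_
  rintro _ ⟨i, j, k, l, -, -, rfl⟩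
  simp only [SetLike.mem_coe, RingHom.mem_ker, map_sub, map_mul, segre_X]
  ring

theorem minors2_eq_ker_segre : minors2 K α β = RingHom.ker (segre K) :=
  le_antisymm minors2_le_ker_segre ker_segre_le_minors2

theorem minors2_isPrime : (minors2 K α β).IsPrime := by
  rw [minors2_eq_ker_segre]
  exact RingHom.ker_isPrime _

theorem prod_X_notMem_minors2 : ∏ p : α × β, X p ∉ minors2 K α β := by
  rw [minors2_eq_ker_segre, RingHom.mem_ker, map_prod]
  refine Finset.prod_ne_zero_iff.mpr fun p _ => ?_
  rw [segre_X]
  exact mul_ne_zero (X_ne_zero _) (X_ne_zero _)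

end Minors

section Saturation

variable {K : Type} [Field K] {α β : Type} [Fintype α] [Fintype β]
  {G1 : SimpleGraph α} {G2 : SimpleGraph β}

lemma minor_mem_saturation_of_reachable_of_adj {i j : α} {k l : β} (hij : G1.Reachable i j)
    (hkl : G2.Adj k l) :
    minor i j k l ∈ (pairIdeal K G1 G2).saturation (∏ p : α × β, X p) := by
  obtain ⟨w⟩ := hij
  induction w with
  | nil => simp [minor, mul_comm]
  | @cons i t j hit _ ih =>
    refine Ideal.mem_saturation_of_dvd_of_mul_mem (a := X (t, k))
      (Finset.dvd_prod_of_mem X (Finset.mem_univ _)) ?_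
    rw [show X (t, k) * minor i j k l = X (i, k) * minor t j k l + X (j, k) * minor i t k l by
      simp only [minor]; ring]
    exact add_mem (Ideal.mul_mem_left _ _ ih) (Ideal.mul_mem_left _ _
      (Ideal.le_saturation (Ideal.subset_span ⟨i, t, k, l, hit, hkl, rfl⟩)))

lemma minor_mem_saturation (h1 : G1.Connected) (i j : α) {k l : β} (hkl : G2.Reachable k l) :
    minor i j k l ∈ (pairIdeal K G1 G2).saturation (∏ p : α × β, X p) := by
  obtain ⟨w⟩ := hkl
  induction w with
  | nil => simp [minor]
  | @cons k t l hkt _ ih =>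
    refine Ideal.mem_saturation_of_dvd_of_mul_mem (a := X (i, t))
      (Finset.dvd_prod_of_mem X (Finset.mem_univ _)) ?_
    rw [show X (i, t) * minor i j k l = X (i, k) * minor i j t l + X (i, l) * minor i j k t by
      simp only [minor]; ring]
    exact add_mem (Ideal.mul_mem_left _ _ ih) (Ideal.mul_mem_left _ _
      (minor_mem_saturation_of_reachable_of_adj (h1.preconnected i j) hkt))

theorem minors2_le_saturation (h1 : G1.Connected) (h2 : G2.Connected) :
    minors2 K α β ≤ (pairIdeal K G1 G2).saturation (∏ p : α × β, X p) :=
  Ideal.span_le.mpr fun _ ⟨i, j, k, l, _, _, hp⟩ =>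
    hp ▸ minor_mem_saturation h1 i j (h2.preconnected k l)

end Saturation

/-- For connected graphs `G₁, G₂`, the saturation `J_{G₁,G₂} : x^∞`, where `x` is the
product of all the variables, equals `I₂(X)`. -/
theorem stmt4 (K : Type) [Field K] (m n : ℕ)
    (G1 : SimpleGraph (Fin m)) (G2 : SimpleGraph (Fin n))
    (h1 : G1.Connected) (h2 : G2.Connected) (f : MvPolynomial (Fin m × Fin n) K) :
    (∃ N : ℕ, (∏ p : Fin m × Fin n, X p) ^ N * f ∈ pairIdeal K G1 G2) ↔
      f ∈ minors2 K (Fin m) (Fin n) := by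
  have hP : (minors2 K (Fin m) (Fin n)).IsPrime := minors2_isPrime
  constructor
  · rintro ⟨N, hN⟩
    refine (hP.mem_or_mem (pairIdeal_le_minors2 hN)).resolve_left fun hx => ?_
    exact prod_X_notMem_minors2 (hP.mem_of_pow_mem N hx)
  · exact fun hf => minors2_le_saturation h1 h2 hf
end

section
/- Let $P$ be a prime ideal of $K[x_{ij}]$ containing $J_{G_1,G_2}$, and let $W=\{(i,j)\in[m]\times[n]: x_{ij}\in P\}$. Then $W$ is an admissible set with respect to $(G_1,G_2)$: whenever $(i,j)\in (e\times f)\cap W$ for some edge $e\in E(G_1)$ and edge $f\in E(G_2)$, either $\{i\}\times f\subset W$ or $e\times\{j\}\subset W$. -/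
open MvPolynomial

/-- `W` is admissible with respect to `(G₁,G₂)`: whenever a point `(a,c)` of a box
`e × f` (with `e = {a,b} ∈ E(G₁)`, `f = {c,d} ∈ E(G₂)`) lies in `W`, then
`{a} × f ⊆ W` or `e × {c} ⊆ W`. -/
def IsAdmissible {α β : Type} (G1 : SimpleGraph α) (G2 : SimpleGraph β)
    (W : Set (α × β)) : Prop :=
  ∀ ⦃a b c d⦄, G1.Adj a b → G2.Adj c d → (a, c) ∈ W → (a, d) ∈ W ∨ (b, c) ∈ W

theorem Ideal.IsPrime.mem_or_mem_of_mul_sub_mul_mem {R : Type*} [CommRing R] {P : Ideal R}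
    (hP : P.IsPrime) {a b c d : R} (h : a * b - c * d ∈ P) (ha : a ∈ P) : c ∈ P ∨ d ∈ P := by
  have hcd : c * d ∈ P := by
    simpa using P.sub_mem (P.mul_mem_right b ha) h
  exact hP.mem_or_mem hcd

theorem minor_mem_pairIdeal (K : Type) [Field K] {α β : Type}
    {G1 : SimpleGraph α} {G2 : SimpleGraph β} {i j : α} {k l : β}
    (hij : G1.Adj i j) (hkl : G2.Adj k l) :
    X (i, k) * X (j, l) - X (i, l) * X (j, k) ∈ pairIdeal K G1 G2 :=
  Ideal.subset_span ⟨i, j, k, l, hij, hkl, rfl⟩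

/-- If `P` is a prime ideal containing `J_{G₁,G₂}`, then the set of variables in `P`
forms an admissible set. -/
theorem stmt7 (K : Type) [Field K] (m n : ℕ)
    (G1 : SimpleGraph (Fin m)) (G2 : SimpleGraph (Fin n))
    (P : Ideal (MvPolynomial (Fin m × Fin n) K)) (hP : P.IsPrime)
    (hJP : pairIdeal K G1 G2 ≤ P) :
    IsAdmissible G1 G2 {p : Fin m × Fin n | X p ∈ P} :=
  fun _ _ _ _ hab hcd hac =>
    hP.mem_or_mem_of_mul_sub_mul_mem (hJP (minor_mem_pairIdeal K hab hcd)) hac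
end

section
/- Let $W\subset[m]\times[n]$ be an admissible set with respect to $(G_1,G_2)$ and define $W^c=\{e\times f: e\in E(G_1), f\in E(G_2), W\cap(e\times f)=\emptyset\}$. Then each connected component of $W^c$ (under the relation that $e\times f$ and $e'\times f'$ are adjacent when $(e\times f)\cap(e'\times f')\neq\emptyset$) is of the form $E_1\times E_2$ for some $E_1\subset E(G_1)$ and $E_2\subset E(G_2)$; i.e., if $e\times f$ and $e'\times f'$ lie in the same component, then so do $e\times f'$ and $e'\times f$. -/
/-- The "box" `e × f` determined by unordered pairs `e` and `f`. -/
def box {α β : Type} (e : Sym2 α) (f : Sym2 β) : Set (α × β) :=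
  {p | p.1 ∈ e ∧ p.2 ∈ f}

/-- The box indexed by `b` belongs to `W^c`: both coordinates are edges and the box
misses `W`. -/
def inWc {α β : Type} (G1 : SimpleGraph α) (G2 : SimpleGraph β) (W : Set (α × β))
    (b : Sym2 α × Sym2 β) : Prop :=
  b.1 ∈ G1.edgeSet ∧ b.2 ∈ G2.edgeSet ∧ box b.1 b.2 ∩ W = ∅

/-- Two boxes of `W^c` are adjacent when they intersect. -/
def boxRel {α β : Type} (G1 : SimpleGraph α) (G2 : SimpleGraph β) (W : Set (α × β))
    (b b' : Sym2 α × Sym2 β) : Prop :=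
  inWc G1 G2 W b ∧ inWc G1 G2 W b' ∧ (box b.1 b.2 ∩ box b'.1 b'.2).Nonempty

section Aux

variable {α β : Type} {G1 : SimpleGraph α} {G2 : SimpleGraph β} {W : Set (α × β)}

/-- The key "swap" lemma: if boxes `e × f` and `e' × f'` lie in `W^c` and the edges
`e, e'` share a vertex and `f, f'` share a vertex, then `e × f'` lies in `W^c` too. -/
lemma swapWc (hW : IsAdmissible G1 G2 W) {e e' : Sym2 α} {f f' : Sym2 β} {a : α} {c : β}
    (hae : a ∈ e) (hae' : a ∈ e') (hcf : c ∈ f) (hcf' : c ∈ f')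
    (h1 : inWc G1 G2 W (e, f)) (h2 : inWc G1 G2 W (e', f')) :
    inWc G1 G2 W (e, f') := by
  obtain ⟨he, hf, hef⟩ := h1
  obtain ⟨he', hf', hef'⟩ := h2
  refine ⟨he, hf', ?_⟩
  obtain ⟨b, rfl⟩ := Sym2.mem_iff_exists.mp hae
  obtain ⟨d', rfl⟩ := Sym2.mem_iff_exists.mp hcf'
  have hadj1 : G1.Adj a b := G1.mem_edgeSet.mp he
  have hadj2 : G2.Adj c d' := G2.mem_edgeSet.mp hf'
  rw [Set.eq_empty_iff_forall_notMem] at hef hef' ⊢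
  rintro ⟨x, y⟩ ⟨⟨hx, hy⟩, hxyW⟩
  simp only [box, Set.mem_setOf_eq] at hx hy
  rcases Sym2.mem_iff.mp hy with rfl | rfl
  · exact hef (x, y) ⟨⟨hx, hcf⟩, hxyW⟩
  · rcases Sym2.mem_iff.mp hx with rfl | rfl
    · exact hef' (x, y) ⟨⟨hae', hy⟩, hxyW⟩
    · rcases hW hadj1.symm hadj2.symm hxyW with hw | hw
      · exact hef (x, c) ⟨⟨hx, hcf⟩, hw⟩
      · exact hef' (a, y) ⟨⟨hae', hy⟩, hw⟩

/-- `W^c` grid lemma: along a chain of boxes `c 0, …, c n` in `W^c`, every "mixed" box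
`(c i).1 × (c j).2` is in `W^c`. -/
lemma gridWc (hW : IsAdmissible G1 G2 W) {n : ℕ} {c : ℕ → Sym2 α × Sym2 β}
    (hrel : ∀ i, i + 1 ≤ n → boxRel G1 G2 W (c i) (c (i + 1)))
    (hmem : ∀ i ≤ n, inWc G1 G2 W (c i)) :
    ∀ k i j, i ≤ n → j ≤ n → Nat.dist i j ≤ k → inWc G1 G2 W ((c i).1, (c j).2) := by
  intro k
  induction k with
  | zero =>
    intro i j hi hj hd
    have hij : i = j := Nat.eq_of_dist_eq_zero (Nat.le_zero.mp hd)
    subst hij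
    simpa using hmem i hi
  | succ k ih =>
    intro i j hi hj hd
    rcases Nat.lt_or_ge (Nat.dist i j) (k + 1) with h | h
    · exact ih i j hi hj (Nat.lt_succ_iff.mp h)
    have hd' : Nat.dist i j = k + 1 := le_antisymm hd h
    rcases lt_trichotomy i j with hij | hij | hij
    · -- i < j
      obtain ⟨j', rfl⟩ : ∃ j', j = j' + 1 := ⟨j - 1, by omega⟩
      have hdist : Nat.dist i j' ≤ k := by simp [Nat.dist] at hd' ⊢; omega
      have hdist2 : Nat.dist (i + 1) (j' + 1) ≤ k := by simp [Nat.dist] at hd' ⊢; omega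
      have hA := ih i j' hi (by omega) hdist
      have hB := ih (i + 1) (j' + 1) (by omega) hj hdist2
      obtain ⟨-, -, ⟨⟨x, y⟩, ⟨hx1, _⟩, ⟨hx2, _⟩⟩⟩ := hrel i (by omega)
      obtain ⟨-, -, ⟨⟨x', y'⟩, ⟨_, hy1⟩, ⟨_, hy2⟩⟩⟩ := hrel j' (by omega)
      exact swapWc hW hx1 hx2 hy1 hy2 hA hB
    · subst hij; simp [Nat.dist_self] at hd'
    · -- j < i
      obtain ⟨i', rfl⟩ : ∃ i', i = i' + 1 := ⟨i - 1, by omega⟩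
      have hdist : Nat.dist (i' + 1) (j + 1) ≤ k := by simp [Nat.dist] at hd' ⊢; omega
      have hdist2 : Nat.dist i' j ≤ k := by simp [Nat.dist] at hd' ⊢; omega
      have hA := ih (i' + 1) (j + 1) hi (by omega) hdist
      have hB := ih i' j (by omega) hj hdist2
      obtain ⟨-, -, ⟨⟨x, y⟩, ⟨hx1, _⟩, ⟨hx2, _⟩⟩⟩ := hrel i' (by omega)
      obtain ⟨-, -, ⟨⟨x', y'⟩, ⟨_, hy1⟩, ⟨_, hy2⟩⟩⟩ := hrel j (by omega)
      exact swapWc hW hx2 hx1 hy2 hy1 hA hB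

lemma rowColChain (hW : IsAdmissible G1 G2 W) {n : ℕ} {c : ℕ → Sym2 α × Sym2 β}
    (hrel : ∀ i, i + 1 ≤ n → boxRel G1 G2 W (c i) (c (i + 1)))
    (hmem : ∀ i ≤ n, inWc G1 G2 W (c i)) :
    ∀ j ≤ n, Relation.ReflTransGen (boxRel G1 G2 W) (c 0) ((c 0).1, (c j).2) ∧
      Relation.ReflTransGen (boxRel G1 G2 W) (c 0) ((c j).1, (c 0).2) := by
  have grid : ∀ i j, i ≤ n → j ≤ n → inWc G1 G2 W ((c i).1, (c j).2) :=
    fun i j hi hj => gridWc hW hrel hmem (Nat.dist i j) i j hi hj le_rfl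
  intro j
  induction j with
  | zero => intro _; constructor <;> · rw [show ((c 0).1, (c 0).2) = c 0 from rfl]
  | succ j ih =>
    intro hj
    obtain ⟨ihr, ihc⟩ := ih (by omega)
    obtain ⟨-, -, ⟨⟨x, y⟩, ⟨hx1, hy1⟩, ⟨hx2, hy2⟩⟩⟩ := hrel j hj
    constructor
    · refine ihr.tail ⟨grid 0 j (by omega) (by omega), grid 0 (j+1) (by omega) hj, ?_⟩
      exact ⟨((c 0).1.out.1, y), ⟨Sym2.out_fst_mem _, hy1⟩, ⟨Sym2.out_fst_mem _, hy2⟩⟩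
    · refine ihc.tail ⟨grid j 0 (by omega) (by omega), grid (j+1) 0 hj (by omega), ?_⟩
      exact ⟨(x, (c 0).2.out.1), ⟨hx1, Sym2.out_fst_mem _⟩, ⟨hx2, Sym2.out_fst_mem _⟩⟩

lemma chain_getD {B : Type} {R : B → B → Prop} :
    ∀ (l : List B) (a d : B), List.Chain R a l → ∀ i, i + 1 ≤ l.length →
      R ((a :: l).getD i d) ((a :: l).getD (i + 1) d) := by
  intro l
  induction l with
  | nil => intro a d _ i hi; simp at hi
  | cons b t ih =>
    intro a d hc i hi
    rcases List.chain_cons.mp hc with ⟨hab, hbt⟩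
    cases i with
    | zero => simpa using hab
    | succ i =>
      have := ih b d hbt i (by simpa using hi)
      simpa using this

end Aux

/-- If `W` is admissible and the boxes `e × f` and `e' × f'` of `W^c` lie in the same
connected component of `W^c`, then so do `e × f'` and `e' × f`; hence each connected
component of `W^c` is of the form `E₁ × E₂`. -/
theorem stmt8 {α β : Type} (G1 : SimpleGraph α) (G2 : SimpleGraph β)
    (W : Set (α × β)) (hW : IsAdmissible G1 G2 W)
    (e e' : Sym2 α) (f f' : Sym2 β)
    (h1 : inWc G1 G2 W (e, f)) (h2 : inWc G1 G2 W (e', f'))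
    (hchain : Relation.ReflTransGen (boxRel G1 G2 W) (e, f) (e', f')) :
    Relation.ReflTransGen (boxRel G1 G2 W) (e, f) (e, f') ∧
      Relation.ReflTransGen (boxRel G1 G2 W) (e, f) (e', f) := by
  obtain ⟨l, hchainl, hlast⟩ := List.exists_isChain_cons_of_relationReflTransGen hchain
  set c : ℕ → Sym2 α × Sym2 β := fun i => ((e, f) :: l).getD i (e, f) with hc
  set n := l.length with hn
  have hc0 : c 0 = (e, f) := rfl
  have hcn : c n = (e', f') := by
    rw [← hlast, List.getLast_eq_getElem]
    simp [hc, hn, List.getD_eq_getElem]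
  have hrel : ∀ i, i + 1 ≤ n → boxRel G1 G2 W (c i) (c (i + 1)) :=
    fun i hi => chain_getD l (e, f) (e, f) hchainl i hi
  have hmem : ∀ i ≤ n, inWc G1 G2 W (c i) := by
    intro i hi
    rcases eq_or_lt_of_le hi with rfl | hi'
    · rw [hcn]; exact h2
    · exact (hrel i hi').1
  have := rowColChain hW hrel hmem n le_rfl
  rw [hcn, hc0] at this
  exact this
end

section
/- Let $G_1$ be the line graph on $[3]$ with edges $\{1,2\},\{2,3\}$ and $G_2$ a connected graph on $[n]$. Let $T\subset[n]$, let $C_1,\ldots,C_r$ be the connected components of the induced subgraph $(G_2)_{[n]\setminus T}$, and let $B\subset[r]$. Then the set $W_{T,B}=([3]\times T)\cup\bigcup_{j\in B}(\{2\}\times V(C_j))$ is an admissible set with respect to $(G_1,G_2)$. -/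
open SimpleGraph

lemma SimpleGraph.connectedComponentMk_induce_compl_eq_of_adj {β : Type} {G : SimpleGraph β}
    {T : Set β} {c d : β} (hcd : G.Adj c d) (hc : c ∈ Tᶜ) (hd : d ∈ Tᶜ) :
    (G.induce Tᶜ).connectedComponentMk ⟨d, hd⟩ = (G.induce Tᶜ).connectedComponentMk ⟨c, hc⟩ :=
  ConnectedComponent.sound (Adj.reachable (by simpa using hcd.symm))

/-- A point of `W` either lies over `T`, whose whole column is in `W`, or lies in row `v` over a
chosen component of `G₂ - T`, and a `G₂`-edge leaving it either enters `T` or stays in that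
component. -/
theorem isAdmissible_union_row_components {α β : Type} (G1 : SimpleGraph α)
    (G2 : SimpleGraph β) (T : Set β) (v : α) (B : Set (G2.induce Tᶜ).ConnectedComponent) :
    IsAdmissible G1 G2
      ({p : α × β | p.2 ∈ T} ∪
        {p : α × β | p.1 = v ∧
          ∃ h : p.2 ∈ Tᶜ, (G2.induce Tᶜ).connectedComponentMk ⟨p.2, h⟩ ∈ B}) := by
  intro a b c d _ hcd hac
  rcases hac with hcT | ⟨rfl, hc, hcB⟩
  · exact Or.inr (Or.inl hcT)
  · by_cases hdT : d ∈ T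
    · exact Or.inl (Or.inl hdT)
    · refine Or.inl (Or.inr ⟨rfl, hdT, ?_⟩)
      rwa [connectedComponentMk_induce_compl_eq_of_adj hcd hc hdT]

theorem stmt10_general (n : ℕ) (G2 : SimpleGraph (Fin n))
    (T : Set (Fin n)) (B : Set (G2.induce Tᶜ).ConnectedComponent) :
    IsAdmissible (SimpleGraph.pathGraph 3) G2
      ({p : Fin 3 × Fin n | p.2 ∈ T} ∪
        {p : Fin 3 × Fin n | p.1 = 1 ∧
          ∃ h : p.2 ∈ Tᶜ, (G2.induce Tᶜ).connectedComponentMk ⟨p.2, h⟩ ∈ B}) :=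
  isAdmissible_union_row_components _ G2 T 1 B

/-- Let `G₁` be the path on `[3]` (vertices `0,1,2` in `Fin 3`, middle vertex `1`),
`G₂` connected on `[n]`, `T ⊆ [n]`, and `B` a set of connected components of the
induced subgraph on `[n] \ T`. Then
`W_{T,B} = ([3] × T) ∪ ⋃_{C ∈ B} ({1} × V(C))` is admissible. -/
theorem stmt10 (n : ℕ) (G2 : SimpleGraph (Fin n)) (h2 : G2.Connected)
    (T : Set (Fin n)) (B : Set (G2.induce Tᶜ).ConnectedComponent) :
    IsAdmissible (SimpleGraph.pathGraph 3) G2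
      ({p : Fin 3 × Fin n | p.2 ∈ T} ∪
        {p : Fin 3 × Fin n | p.1 = 1 ∧
          ∃ h : p.2 ∈ Tᶜ, (G2.induce Tᶜ).connectedComponentMk ⟨p.2, h⟩ ∈ B}) :=
  stmt10_general n G2 T B
end

section
/- Let $S$ be a polynomial ring over a field with a monomial order $<$, let $I_1,\ldots,I_r\subset S$ be ideals with supporting sets of variables $X_1,\ldots,X_r$ which are pairwise disjoint, and let $f_1,\ldots,f_r\in S$ with $\mathrm{supp}(f_j)\subset X_j$ and $f_j\notin I_j$ for each $j$. Then $\prod_{j=1}^r f_j\notin \sum_{j=1}^r I_j$. -/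
/-!
Pick `K`-linear functionals `φⱼ` vanishing on `Iⱼ` with `φⱼ fⱼ ≠ 0`. For two factors, supported in
`s` and `sᶜ`, let `Δ : S → S ⊗ S` be the algebra map with `xᵢ ↦ xᵢ ⊗ 1` for `i ∈ s` and
`xᵢ ↦ 1 ⊗ xᵢ` otherwise. It sends the generators `g` of `I₁` to `g ⊗ 1` and those of `I₂` to
`1 ⊗ g`, so it maps `I₁ + I₂` into the ideal `I₁ ⊗ S + S ⊗ I₂`, on which `φ₁ ⊗ φ₂` vanishes; but
`(φ₁ ⊗ φ₂)(Δ (f₁ f₂)) = φ₁ f₁ · φ₂ f₂ ≠ 0`. The general case follows by induction, because a sum of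
ideals supported in `X₁, …, X_{r-1}` is supported in `X_rᶜ`.
-/

open MvPolynomial

section

open TensorProduct

variable {K σ : Type*} [Field K]

def Ideal.IsSupportedIn {R : Type*} [CommSemiring R] (I : Ideal (MvPolynomial σ R)) (X : Set σ) :
    Prop :=
  ∃ G ⊆ (supported R X : Set (MvPolynomial σ R)), I = Ideal.span G

namespace Ideal.IsSupportedIn

variable {R : Type*} [CommSemiring R] {X Y : Set σ}

theorem mono {I : Ideal (MvPolynomial σ R)} (h : I.IsSupportedIn X) (hXY : X ⊆ Y) :
    I.IsSupportedIn Y :=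
  let ⟨G, hG, hI⟩ := h
  ⟨G, hG.trans (supported_mono hXY), hI⟩

theorem iSup {ι : Sort*} {I : ι → Ideal (MvPolynomial σ R)} (h : ∀ i, (I i).IsSupportedIn X) :
    (⨆ i, I i).IsSupportedIn X := by
  choose G hG hI using h
  exact ⟨⋃ i, G i, Set.iUnion_subset hG, by simp_rw [Ideal.span_iUnion, ← hI]⟩

end Ideal.IsSupportedIn

def LinearMap.kerIdeal {A : Type*} [CommRing A] [Algebra K A] (φ : A →ₗ[K] K) : Ideal A where
  carrier := {a | ∀ b, φ (b * a) = 0}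
  add_mem' ha hb c := by simp [mul_add, ha c, hb c]
  zero_mem' := by simp
  smul_mem' a x hx b := by simpa [mul_assoc] using hx (b * a)

section TensorFunctional

variable {A B : Type*} [CommRing A] [CommRing B] [Algebra K A] [Algebra K B]
  {φ : A →ₗ[K] K} {ψ : B →ₗ[K] K}

theorem tmul_one_mem_kerIdeal {I : Ideal A} (hφ : ∀ a ∈ I, φ a = 0) {a : A} (ha : a ∈ I) :
    a ⊗ₜ (1 : B) ∈ (LinearMap.mul' K K ∘ₗ map φ ψ).kerIdeal := by
  intro t
  induction t using TensorProduct.induction_on with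
  | zero => simp
  | tmul x y => simp [hφ _ (I.mul_mem_left x ha)]
  | add t t' ht ht' => simp_all [add_mul]

theorem one_tmul_mem_kerIdeal {J : Ideal B} (hψ : ∀ b ∈ J, ψ b = 0) {b : B} (hb : b ∈ J) :
    (1 : A) ⊗ₜ b ∈ (LinearMap.mul' K K ∘ₗ map φ ψ).kerIdeal := by
  intro t
  induction t using TensorProduct.induction_on with
  | zero => simp
  | tmul x y => simp [hψ _ (J.mul_mem_left y hb)]
  | add t t' ht ht' => simp_all [add_mul]

end TensorFunctional

namespace MvPolynomial

open Classical in
noncomputable def splitVars (R : Type*) [CommSemiring R] (s : Set σ) :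
    MvPolynomial σ R →ₐ[R] MvPolynomial σ R ⊗[R] MvPolynomial σ R :=
  aeval fun i => if i ∈ s then X i ⊗ₜ 1 else 1 ⊗ₜ X i

variable {R : Type*} [CommSemiring R] {s : Set σ}

theorem splitVars_of_mem_supported {p : MvPolynomial σ R} (hp : p ∈ supported R s) :
    splitVars R s p = p ⊗ₜ 1 := by
  rw [supported_eq_range_rename] at hp
  obtain ⟨q, rfl⟩ := hp
  change ((splitVars R s).comp (rename _)) q =
    (Algebra.TensorProduct.includeLeft.comp (rename _)) q
  congr 1
  ext i
  simp [splitVars, i.2]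

theorem splitVars_of_mem_supported_compl {p : MvPolynomial σ R} (hp : p ∈ supported R sᶜ) :
    splitVars R s p = 1 ⊗ₜ p := by
  rw [supported_eq_range_rename] at hp
  obtain ⟨q, rfl⟩ := hp
  change ((splitVars R s).comp (rename _)) q =
    ((Algebra.TensorProduct.includeRight).comp (rename _)) q
  congr 1
  ext i
  simp [splitVars, show (i : σ) ∉ s from i.2]

end MvPolynomial

theorem Ideal.exists_dual_eq_zero_of_notMem {A : Type*} [CommRing A] [Algebra K A] {I : Ideal A}
    {a : A} (ha : a ∉ I) : ∃ φ : A →ₗ[K] K, φ a ≠ 0 ∧ ∀ b ∈ I, φ b = 0 := by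
  obtain ⟨φ, hφa, hφI⟩ :=
    Submodule.exists_dual_map_eq_bot_of_notMem (p := I.restrictScalars K) ha inferInstance
  exact ⟨φ, hφa, fun b hb => LinearMap.le_ker_iff_map.2 hφI hb⟩

theorem MvPolynomial.mul_notMem_sup {s : Set σ} {I J : Ideal (MvPolynomial σ K)}
    (hI : I.IsSupportedIn s) (hJ : J.IsSupportedIn sᶜ) {f g : MvPolynomial σ K}
    (hf : f ∈ supported K s) (hg : g ∈ supported K sᶜ) (hfI : f ∉ I) (hgJ : g ∉ J) :
    f * g ∉ I ⊔ J := by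
  obtain ⟨φ, hφf, hφI⟩ := Ideal.exists_dual_eq_zero_of_notMem (K := K) hfI
  obtain ⟨ψ, hψg, hψJ⟩ := Ideal.exists_dual_eq_zero_of_notMem (K := K) hgJ
  have hle :
      I ⊔ J ≤ (LinearMap.mul' K K ∘ₗ TensorProduct.map φ ψ).kerIdeal.comap (splitVars K s) := by
    obtain ⟨G, hG, rfl⟩ := hI
    obtain ⟨H, hH, rfl⟩ := hJ
    refine sup_le (Ideal.span_le.2 fun p hp => ?_) (Ideal.span_le.2 fun p hp => ?_)
    · rw [SetLike.mem_coe, Ideal.mem_comap, splitVars_of_mem_supported (hG hp)]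
      exact tmul_one_mem_kerIdeal hφI (Ideal.subset_span hp)
    · rw [SetLike.mem_coe, Ideal.mem_comap, splitVars_of_mem_supported_compl (hH hp)]
      exact one_tmul_mem_kerIdeal hψJ (Ideal.subset_span hp)
  intro hfg
  have := hle hfg 1
  rw [one_mul, map_mul, splitVars_of_mem_supported hf, splitVars_of_mem_supported_compl hg,
    Algebra.TensorProduct.tmul_mul_tmul, one_mul, mul_one] at this
  simp only [LinearMap.comp_apply, TensorProduct.map_tmul, LinearMap.mul'_apply] at this
  exact mul_ne_zero hφf hψg this

theorem MvPolynomial.prod_notMem_biSup {ι : Type*} {X : ι → Set σ}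
    (hX : Pairwise (Function.onFun Disjoint X)) {I : ι → Ideal (MvPolynomial σ K)}
    (hI : ∀ j, (I j).IsSupportedIn (X j)) {f : ι → MvPolynomial σ K}
    (hf : ∀ j, f j ∈ supported K (X j)) (hfI : ∀ j, f j ∉ I j) (u : Finset ι) :
    ∏ j ∈ u, f j ∉ ⨆ j ∈ u, I j := by
  classical
  induction u using Finset.induction_on with
  | empty => simp
  | insert a u ha ih =>
    have hcompl : ∀ j ∈ u, X j ⊆ (X a)ᶜ := fun j hj =>
      le_compl_iff_disjoint_right.2 (hX (ne_of_mem_of_not_mem hj ha))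
    rw [Finset.prod_insert ha, Finset.iSup_insert]
    exact mul_notMem_sup (hI a)
      (.iSup fun j => .iSup fun hj => (hI j).mono (hcompl j hj)) (hf a)
      (Subalgebra.prod_mem _ fun j hj => supported_mono (hcompl j hj) (hf j)) (hfI a) ih

end

theorem stmt14_general (K σ : Type) [Field K] (r : ℕ)
    (Xs : Fin r → Set σ) (hdisj : Pairwise (Function.onFun Disjoint Xs))
    (I : Fin r → Ideal (MvPolynomial σ K))
    (hI : ∀ j, ∃ G : Set (MvPolynomial σ K),
      (∀ g ∈ G, ↑g.vars ⊆ Xs j) ∧ I j = Ideal.span G)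
    (f : Fin r → MvPolynomial σ K)
    (hsupp : ∀ j, ↑(f j).vars ⊆ Xs j) (hf : ∀ j, f j ∉ I j) :
    (∏ j, f j) ∉ (⨆ j, I j : Ideal (MvPolynomial σ K)) := by
  have hIs : ∀ j, (I j).IsSupportedIn (Xs j) := fun j =>
    let ⟨G, hG, hIG⟩ := hI j
    ⟨G, fun g hg => mem_supported.2 (hG g hg), hIG⟩
  simpa using prod_notMem_biSup hdisj hIs (fun j => mem_supported.2 (hsupp j)) hf Finset.univ

/-- Let `S = K[σ]` with a monomial order, let `I₁, …, I_r` be ideals supported in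
pairwise disjoint sets of variables `X₁, …, X_r`, and `f₁, …, f_r` polynomials with
`supp(f_j) ⊆ X_j` and `f_j ∉ I_j`. Then `∏ f_j ∉ Σ I_j`. -/
theorem stmt14 (K σ : Type) [Field K] (mo : MonomialOrder σ) (r : ℕ)
    (Xs : Fin r → Set σ) (hdisj : Pairwise (Function.onFun Disjoint Xs))
    (I : Fin r → Ideal (MvPolynomial σ K))
    (hI : ∀ j, ∃ G : Set (MvPolynomial σ K),
      (∀ g ∈ G, ↑g.vars ⊆ Xs j) ∧ I j = Ideal.span G)
    (f : Fin r → MvPolynomial σ K)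
    (hsupp : ∀ j, ↑(f j).vars ⊆ Xs j) (hf : ∀ j, f j ∉ I j) :
    (∏ j, f j) ∉ (⨆ j, I j : Ideal (MvPolynomial σ K)) :=
  stmt14_general K σ r Xs hdisj I hI f hsupp hf
end

section
/- Let $S$ be a polynomial ring over a field and let $I_1,\ldots,I_r\subset S$ be ideals generated by polynomials in pairwise disjoint sets of variables $X_1,\ldots,X_r$. Fix a monomial order $<$ on $S$. Then $\mathrm{in}_<(I_1+\cdots+I_r)=\mathrm{in}_<(I_1)+\cdots+\mathrm{in}_<(I_r)$. -/
open MvPolynomial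

noncomputable def leadDegree {K σ : Type} [Field K] (mo : MonomialOrder σ)
    (f : MvPolynomial σ K) : σ →₀ ℕ :=
  mo.toSyn.symm (f.support.sup fun d => mo.toSyn d)

noncomputable def initialIdeal {K σ : Type} [Field K] (mo : MonomialOrder σ)
    (I : Ideal (MvPolynomial σ K)) : Ideal (MvPolynomial σ K) :=
  Ideal.span {g | ∃ f ∈ I, f ≠ 0 ∧ g = monomial (leadDegree mo f) (1 : K)}

/-!
Write `f ∈ I₁ + ⋯ + I_r` as `∑ gⱼ` with `gⱼ ∈ Iⱼ`, choosing the representation that minimises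
the sum of the degrees of the `gⱼ` (this sum lives in the well-ordered monoid of the monomial
order). If the top degree `δ` among the `gⱼ` survives in `f`, then `in(f) = in(gⱼ)` for some `j`.
Otherwise two summands `gⱼ, gₖ` have degree `δ`. Dividing `gⱼ` by the part of `x^δ` outside `Xⱼ`
and `gₖ` by the part inside `Xⱼ` keeps them in `Iⱼ` and `Iₖ` respectively, because division by a
monomial commutes with multiplication by polynomials in the other variables; the product of the
two quotients is an element of `Iⱼ ∩ Iₖ` with leading monomial `x^δ`. Moving a multiple of it
from `gⱼ` to `gₖ` cancels the leading term of `gⱼ` and lowers the degree sum: a contradiction.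
-/

namespace MonomialOrder

variable {σ R : Type*} [CommRing R] {m : MonomialOrder σ}

theorem degree_eq_of_coeff_ne_zero {f : MvPolynomial σ R} {d : σ →₀ ℕ} (hd : f.coeff d ≠ 0)
    (h : m.degree f ≼[m] d) : m.degree f = d :=
  m.toSyn.injective (le_antisymm h (m.le_degree (mem_support_iff.2 hd)))

theorem degree_divMonomial {p : MvPolynomial σ R} {e : σ →₀ ℕ} (he : e ≤ m.degree p) :
    m.degree (p.divMonomial e) = m.degree p - e := by
  rcases eq_or_ne p 0 with rfl | hp
  · simp_all
  refine degree_eq_of_coeff_ne_zero ?_ (degree_le_iff.2 fun c hc => ?_)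
  · rwa [coeff_divMonomial, add_tsub_cancel_of_le he, ← leadingCoeff, leadingCoeff_ne_zero_iff]
  · rw [mem_support_iff, coeff_divMonomial] at hc
    have := m.le_degree (mem_support_iff.2 hc)
    rwa [← add_tsub_cancel_of_le he, map_add, map_add, add_le_add_iff_left] at this

theorem leadingTerm_divMonomial {p : MvPolynomial σ R} {e : σ →₀ ℕ} (he : e ≤ m.degree p) :
    m.leadingTerm (p.divMonomial e) = monomial (m.degree p - e) (m.leadingCoeff p) := by
  rw [leadingTerm, leadingCoeff, degree_divMonomial he, coeff_divMonomial,
    add_tsub_cancel_of_le he, leadingCoeff]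

theorem degree_sub_lt_of_leadingTerm_eq {f g : MvPolynomial σ R} (hf : m.degree f ≠ 0)
    (h : m.leadingTerm f = m.leadingTerm g) : m.degree (f - g) ≺[m] m.degree f := by
  have hg : m.degree g = m.degree f := (leadingTerm_eq_leadingTerm_iff.1 h).2.symm
  have hfg : f - g = (f - m.leadingTerm f) - (g - m.leadingTerm g) := by rw [h]; ring
  rw [hfg]
  refine degree_sub_le.trans_lt (max_lt (degree_sub_leadingTerm_lt_degree hf) ?_)
  rw [← hg]
  exact degree_sub_leadingTerm_lt_degree (hg ▸ hf)

end MonomialOrder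

namespace MvPolynomial

variable {σ R : Type*} [CommRing R]

theorem divMonomial_mul_of_forall_vars {a g : MvPolynomial σ R} {e : σ →₀ ℕ}
    (he : ∀ i ∈ g.vars, e i = 0) : (a * g).divMonomial e = a.divMonomial e * g := by
  classical
  have hrem : (a.modMonomial e * g).divMonomial e = 0 := by
    ext c
    rw [coeff_divMonomial, coeff_zero, ← notMem_support_iff]
    intro hc
    obtain ⟨u, hu, v, hv, huv⟩ := Finset.mem_add.1 (support_mul _ _ hc)
    refine mem_support_iff.1 hu (coeff_modMonomial_of_le _ fun i => ?_)
    have hvi : v i = 0 ∨ e i = 0 := by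
      by_cases hi : i ∈ g.vars
      · exact .inr (he i hi)
      · exact .inl (mem_support_notMem_vars_zero hv hi)
    have := congrArg (· i) huv
    simp only [Finsupp.add_apply] at this
    omega
  conv_lhs => rw [← divMonomial_add_modMonomial a e]
  rw [add_mul, add_divMonomial, mul_assoc, divMonomial_monomial_mul, hrem, add_zero]

theorem divMonomial_mem_span {G : Set (MvPolynomial σ R)} {e : σ →₀ ℕ}
    (he : ∀ g ∈ G, ∀ i ∈ g.vars, e i = 0) {p : MvPolynomial σ R} (hp : p ∈ Ideal.span G) :
    p.divMonomial e ∈ Ideal.span G := by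
  suffices ∀ a, (a * p).divMonomial e ∈ Ideal.span G by simpa using this 1
  induction hp using Submodule.span_induction with
  | mem g hg =>
    intro a
    rw [divMonomial_mul_of_forall_vars (he g hg)]
    exact Ideal.mul_mem_left _ _ (Ideal.subset_span hg)
  | zero => simp [zero_divMonomial]
  | add x y _ _ hx hy =>
    intro a
    rw [mul_add, add_divMonomial]
    exact add_mem (hx a) (hy a)
  | smul b x _ hx =>
    intro a
    rw [smul_eq_mul, ← mul_assoc]
    exact hx _

end MvPolynomial

namespace MonomialOrder

variable {σ R ι : Type*} [CommRing R] [Fintype ι] (m : MonomialOrder σ)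

noncomputable def degreeSum (g : ι → MvPolynomial σ R) : m.syn := ∑ j, m.toSyn (m.degree (g j))

variable {m}

theorem exists_degreeSum_lt {I : ι → Ideal (MvPolynomial σ R)}
    (hI : ∀ j k, j ≠ k → ∀ p ∈ I j, ∀ q ∈ I k, q ≠ 0 → m.degree p = m.degree q →
      ∃ t ∈ I j ⊓ I k, m.leadingTerm t = m.leadingTerm p)
    {g : ι → MvPolynomial σ R} (hg : ∀ j, g j ∈ I j) {j₀ k : ι} (hk : k ≠ j₀) (hk0 : g k ≠ 0)
    (hdeg : m.degree (g k) = m.degree (g j₀)) (h0 : m.degree (g j₀) ≠ 0) :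
    ∃ g' : ι → MvPolynomial σ R,
      (∀ j, g' j ∈ I j) ∧ ∑ j, g' j = ∑ j, g j ∧ m.degreeSum g' < m.degreeSum g := by
  classical
  obtain ⟨t, ⟨htj₀, htk⟩, ht⟩ := hI j₀ k hk.symm _ (hg j₀) _ (hg k) hk0 hdeg.symm
  have hdt : m.degree t = m.degree (g j₀) := (leadingTerm_eq_leadingTerm_iff.1 ht).2
  have hlt : m.degree (g j₀ - t) ≺[m] m.degree (g j₀) :=
    degree_sub_lt_of_leadingTerm_eq h0 ht.symm
  have hsingle : ∀ i, t ∈ I i → ∀ j, (Pi.single i t : ι → MvPolynomial σ R) j ∈ I j := by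
    intro i hi j
    rcases eq_or_ne j i with rfl | h
    · simpa
    · simp [h]
  refine ⟨g - Pi.single j₀ t + Pi.single k t,
    fun j => add_mem (sub_mem (hg j) (hsingle j₀ htj₀ j)) (hsingle k htk j),
    by simp [Finset.sum_add_distrib, Finset.sum_sub_distrib],
    Finset.sum_lt_sum (fun j _ => ?_) ⟨j₀, Finset.mem_univ _, by simpa [hk.symm] using hlt⟩⟩
  rcases eq_or_ne j j₀ with rfl | hj₀
  · simpa [hk.symm] using hlt.le
  rcases eq_or_ne j k with rfl | hjk
  · simpa [hj₀, hdt, hdeg] using degree_add_le (m := m) (f := g j) (g := t)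
  · simp [hj₀, hjk]

theorem exists_degree_eq_of_mem_iSup {I : ι → Ideal (MvPolynomial σ R)}
    (hI : ∀ j k, j ≠ k → ∀ p ∈ I j, ∀ q ∈ I k, q ≠ 0 → m.degree p = m.degree q →
      ∃ t ∈ I j ⊓ I k, m.leadingTerm t = m.leadingTerm p)
    {f : MvPolynomial σ R} (hf : f ∈ ⨆ j, I j) (hf0 : f ≠ 0) :
    ∃ j, ∃ g ∈ I j, g ≠ 0 ∧ m.degree g = m.degree f := by
  have hrep : {g : ι → MvPolynomial σ R | (∀ j, g j ∈ I j) ∧ ∑ j, g j = f}.Nonempty := by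
    obtain ⟨v, hv, rfl⟩ := (Submodule.mem_iSup_iff_exists_finsupp _ f).1 hf
    exact ⟨v, hv, (Finsupp.sum_fintype v (fun _ x => x) fun _ => rfl).symm⟩
  obtain ⟨g, ⟨hgI, rfl⟩, hmin⟩ := (InvImage.wf m.degreeSum wellFounded_lt).has_min _ hrep
  obtain ⟨j, -, -⟩ := Finset.exists_ne_zero_of_sum_ne_zero hf0
  have : Nonempty ι := ⟨j⟩
  obtain ⟨j₀, hle⟩ := Finite.exists_max fun j => m.toSyn (m.degree (g j))
  have hsum_le : m.degree (∑ j, g j) ≼[m] m.degree (g j₀) :=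
    degree_sum_le.trans (Finset.sup_le fun j _ => hle j)
  obtain hd | hd := ne_or_eq ((∑ j, g j).coeff (m.degree (g j₀))) 0
  · obtain ⟨j, -, hj⟩ := Finset.exists_ne_zero_of_sum_ne_zero (by rwa [coeff_sum] at hd)
    refine ⟨j, g j, hgI j, fun h => hj (by simp [h]), ?_⟩
    rw [degree_eq_of_coeff_ne_zero hj (hle j), degree_eq_of_coeff_ne_zero hd hsum_le]
  exfalso
  have hd0 : m.degree (g j₀) ≠ 0 := by
    intro h
    have hsum0 : m.degree (∑ j, g j) = m.degree (g j₀) :=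
      m.toSyn.injective (le_antisymm hsum_le (by simp [h]))
    exact hf0 (coeff_degree_eq_zero_iff.1 (hsum0 ▸ hd))
  obtain ⟨k, hk, hk0⟩ : ∃ k, k ≠ j₀ ∧ (g k).coeff (m.degree (g j₀)) ≠ 0 := by
    by_contra! h
    rw [coeff_sum, Finset.sum_eq_single j₀ (fun k _ hk => h k hk) (by simp)] at hd
    exact coeff_degree_ne_zero_iff.2 (ne_zero_of_degree_ne_zero hd0) hd
  obtain ⟨g', hg'I, hg'sum, hlt⟩ := exists_degreeSum_lt hI hgI hk (fun h => hk0 (by simp [h]))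
    (degree_eq_of_coeff_ne_zero hk0 (hle k)) hd0
  exact hmin g' ⟨hg'I, hg'sum⟩ hlt

end MonomialOrder

namespace MvPolynomial

variable {σ K : Type*} [Field K] {m : MonomialOrder σ}

theorem exists_mem_inf_leadingTerm_eq_of_disjoint_vars {X₁ X₂ : Set σ} (hX : Disjoint X₁ X₂)
    {G₁ G₂ : Set (MvPolynomial σ K)} (hG₁ : ∀ g ∈ G₁, ↑g.vars ⊆ X₁)
    (hG₂ : ∀ g ∈ G₂, ↑g.vars ⊆ X₂) {p q : MvPolynomial σ K} (hp : p ∈ Ideal.span G₁)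
    (hq : q ∈ Ideal.span G₂) (hq0 : q ≠ 0) (hpq : m.degree p = m.degree q) :
    ∃ t ∈ Ideal.span G₁ ⊓ Ideal.span G₂, m.leadingTerm t = m.leadingTerm p := by
  classical
  set a := (m.degree p).filter (· ∈ X₁)
  have ha : a ≤ m.degree p := fun i => by by_cases hi : i ∈ X₁ <;> simp [a, hi]
  set b := m.degree p - a
  have hp' : p.divMonomial b ∈ Ideal.span G₁ := divMonomial_mem_span (fun g hg i hi => by
    simp [b, a, Finsupp.filter_apply_pos _ _ (hG₁ g hg hi)]) hp
  have hq' : q.divMonomial a ∈ Ideal.span G₂ := divMonomial_mem_span (fun g hg i hi => by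
    simp [a, Finsupp.filter_apply_neg _ _ (Set.disjoint_right.1 hX (hG₂ g hg hi))]) hq
  refine ⟨C (m.leadingCoeff q)⁻¹ * (p.divMonomial b * q.divMonomial a),
    ⟨Ideal.mul_mem_left _ _ (Ideal.mul_mem_right _ _ hp'),
      Ideal.mul_mem_left _ _ (Ideal.mul_mem_left _ _ hq')⟩, ?_⟩
  rw [MonomialOrder.leadingTerm_mul, MonomialOrder.leadingTerm_mul, MonomialOrder.leadingTerm_C,
    MonomialOrder.leadingTerm_divMonomial tsub_le_self,
    MonomialOrder.leadingTerm_divMonomial (hpq ▸ ha), monomial_mul, C_mul_monomial,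
    MonomialOrder.leadingTerm, ← hpq, tsub_tsub_cancel_of_le ha, add_tsub_cancel_of_le ha,
    mul_comm (m.leadingCoeff p),
    inv_mul_cancel_left₀ (MonomialOrder.leadingCoeff_ne_zero_iff.2 hq0)]

end MvPolynomial

section InitialIdeal

variable {K σ : Type} [Field K] {mo : MonomialOrder σ}

-- `leadDegree mo f` unfolds to `mo.degree f`, which lets Mathlib's degree API apply below.
theorem initialIdeal_le_iff {I J : Ideal (MvPolynomial σ K)} :
    initialIdeal mo I ≤ J ↔ ∀ f ∈ I, f ≠ 0 → monomial (mo.degree f) 1 ∈ J := by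
  simp only [initialIdeal, Ideal.span_le]
  exact ⟨fun h f hf hf0 => h ⟨f, hf, hf0, rfl⟩, by rintro h _ ⟨f, hf, hf0, rfl⟩; exact h f hf hf0⟩

theorem monomial_degree_mem_initialIdeal {I : Ideal (MvPolynomial σ K)} {f : MvPolynomial σ K}
    (hf : f ∈ I) (hf0 : f ≠ 0) : monomial (mo.degree f) 1 ∈ initialIdeal mo I :=
  Ideal.subset_span ⟨f, hf, hf0, rfl⟩

theorem initialIdeal_mono {I J : Ideal (MvPolynomial σ K)} (h : I ≤ J) :
    initialIdeal mo I ≤ initialIdeal mo J :=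
  initialIdeal_le_iff.2 fun _ hf hf0 => monomial_degree_mem_initialIdeal (h hf) hf0

theorem initialIdeal_iSup {ι : Type*} [Fintype ι] {I : ι → Ideal (MvPolynomial σ K)}
    (hI : ∀ j k, j ≠ k → ∀ p ∈ I j, ∀ q ∈ I k, q ≠ 0 → mo.degree p = mo.degree q →
      ∃ t ∈ I j ⊓ I k, mo.leadingTerm t = mo.leadingTerm p) :
    initialIdeal mo (⨆ j, I j) = ⨆ j, initialIdeal mo (I j) := by
  refine le_antisymm (initialIdeal_le_iff.2 fun f hf hf0 => ?_)
    (iSup_le fun j => initialIdeal_mono (le_iSup I j))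
  obtain ⟨j, g, hg, hg0, hgf⟩ := MonomialOrder.exists_degree_eq_of_mem_iSup hI hf hf0
  exact le_iSup (fun j => initialIdeal mo (I j)) j (hgf ▸ monomial_degree_mem_initialIdeal hg hg0)

end InitialIdeal

/-- If `I₁, …, I_r` are ideals generated by polynomials in pairwise disjoint sets of
variables, then `in_<(I₁ + ⋯ + I_r) = in_<(I₁) + ⋯ + in_<(I_r)`. -/
theorem stmt15 (K σ : Type) [Field K] (mo : MonomialOrder σ) (r : ℕ)
    (Xs : Fin r → Set σ) (hdisj : Pairwise (Function.onFun Disjoint Xs))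
    (I : Fin r → Ideal (MvPolynomial σ K))
    (hI : ∀ j, ∃ G : Set (MvPolynomial σ K),
      (∀ g ∈ G, ↑g.vars ⊆ Xs j) ∧ I j = Ideal.span G) :
    initialIdeal mo (⨆ j, I j) = ⨆ j, initialIdeal mo (I j) := by
  refine initialIdeal_iSup fun j k hjk p hp q hq hq0 hpq => ?_
  obtain ⟨G₁, hG₁, hI₁⟩ := hI j
  obtain ⟨G₂, hG₂, hI₂⟩ := hI k
  rw [hI₁] at hp ⊢
  rw [hI₂] at hq ⊢
  exact exists_mem_inf_leadingTerm_eq_of_disjoint_vars (hdisj hjk) hG₁ hG₂ hp hq hq0 hpq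
end

section
/- Let $G_1,G_2$ be graphs, $T_1\subset V(G_1)$, $T_2\subset V(G_2)$, and suppose $r$ connected components of the induced subgraph $(G_1)_{V(G_1)\setminus T_1}$ and $s$ connected components of $(G_2)_{V(G_2)\setminus T_2}$ each contain an induced path of length 2. Then the index of nilpotency of the binomial edge ideal $J_{G_1,G_2}$ satisfies $\mathrm{nilpot}(J_{G_1,G_2})\geq rs+1$, i.e., $(\sqrt{J_{G_1,G_2}})^{rs}\not\subset J_{G_1,G_2}$. -/
/-!
For induced paths `a - b - c` in `G₁` and `a' - b' - c'` in `G₂`, the element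
`x_{bb'} (x_{aa'} x_{cc'} - x_{ac'} x_{ca'})` has its square in `J = J_{G₁,G₂}`, so the product `f`
of these `rs` elements lies in `(√J)^{rs}`. To see `f ∉ J`, sum the coefficients over the set `Z` of
exponents that live on the chosen vertices and whose restriction to each pair of paths is the
permutation matrix of `1`, `(0 1)` or `(1 2)`. The generators of `J` are binomials, and when the
paths lie in distinct components of the graphs, multiplying such a binomial by a monomial never
separates its two terms across `Z`; so the functional kills `J`. Expanding `f`, the only monomial
landing in `Z` is the product of the diagonal terms, so the functional takes the value `1` on `f`.
-/

open MvPolynomial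

open SimpleGraph Equiv Function Finset

section CoeffSum

variable {σ R : Type*} [CommRing R]

noncomputable def coeffSum (Z : Set (σ →₀ ℕ)) : MvPolynomial σ R →ₗ[R] R :=
  Finsupp.linearCombination R (Z.indicator 1) ∘ₗ (AddMonoidAlgebra.coeffLinearEquiv R).toLinearMap

variable {Z : Set (σ →₀ ℕ)}

lemma coeffSum_monomial (μ : σ →₀ ℕ) (a : R) :
    coeffSum Z (monomial μ a) = Z.indicator (fun _ ↦ a) μ := by
  classical
  have : coeffSum Z (monomial μ a) = a • Z.indicator 1 μ := Finsupp.linearCombination_single R a μ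
  simp [this, Set.indicator_apply]

lemma coeffSum_mul_binomial {a b : σ →₀ ℕ} (hab : ∀ μ, μ + a ∈ Z ↔ μ + b ∈ Z)
    (f : MvPolynomial σ R) : coeffSum Z (f * (monomial a 1 - monomial b 1)) = 0 := by
  induction f using MvPolynomial.induction_on' with
  | monomial μ c =>
    classical
    simp only [mul_sub, monomial_mul, mul_one, map_sub, coeffSum_monomial, Set.indicator_apply,
      hab, sub_self]
  | add p q hp hq => rw [add_mul, map_add, hp, hq, add_zero]

lemma coeffSum_eq_zero_of_mem_span {S : Set (MvPolynomial σ R)}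
    (hS : ∀ g ∈ S, ∃ a b, g = monomial a 1 - monomial b 1 ∧ ∀ μ, μ + a ∈ Z ↔ μ + b ∈ Z)
    {f : MvPolynomial σ R} (hf : f ∈ Ideal.span S) : coeffSum Z f = 0 := by
  suffices ∀ h, coeffSum Z (h * f) = 0 by simpa using this 1
  induction hf using Submodule.span_induction with
  | mem g hg =>
    obtain ⟨a, b, rfl, hab⟩ := hS g hg
    exact coeffSum_mul_binomial hab
  | zero => simp
  | add x y _ _ hx hy => simp [mul_add, hx, hy]
  | smul c x _ hx => intro h; rw [smul_eq_mul, ← mul_assoc, hx]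

end CoeffSum

def centralMinor {R : Type*} [CommRing R] (y : Fin 3 → Fin 3 → R) : R :=
  y 1 1 * (y 0 0 * y 2 2 - y 0 2 * y 2 0)

lemma centralMinor_sq_mem {R : Type*} [CommRing R] {I : Ideal R} {y : Fin 3 → Fin 3 → R}
    (hy : ∀ ρ ρ' σ σ', (pathGraph 3).Adj ρ ρ' → (pathGraph 3).Adj σ σ' →
      y ρ σ * y ρ' σ' - y ρ σ' * y ρ' σ ∈ I) :
    centralMinor y ^ 2 ∈ I := by
  have adj01 : (pathGraph 3).Adj 0 1 := by simp [pathGraph_adj]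
  have adj12 : (pathGraph 3).Adj 1 2 := by simp [pathGraph_adj]
  have key : centralMinor y ^ 2 =
      (y 1 1 * y 2 2 * (y 0 0 * y 2 2 - 2 * y 0 2 * y 2 0) + y 0 1 * y 1 2 * y 2 0 * y 2 2)
          * (y 0 0 * y 1 1 - y 0 1 * y 1 0)
        + (y 0 1 * y 1 0 * y 2 0 * y 2 2 - y 0 2 * y 1 0 * y 2 0 * y 2 1)
          * (y 0 1 * y 1 2 - y 0 2 * y 1 1)
        + (y 0 0 * y 0 1 * y 1 2 * y 2 2 - y 0 2 * y 0 2 * y 1 1 * y 2 0)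
          * (y 1 0 * y 2 1 - y 1 1 * y 2 0)
        + (y 0 0 * y 0 1 * y 1 0 * y 2 2 - y 0 1 * y 0 2 * y 1 0 * y 2 0)
          * (y 1 1 * y 2 2 - y 1 2 * y 2 1) := by
    unfold centralMinor; ring
  rw [key]
  exact I.add_mem (I.add_mem (I.add_mem (I.mul_mem_left _ (hy _ _ _ _ adj01 adj01))
    (I.mul_mem_left _ (hy _ _ _ _ adj01 adj12))) (I.mul_mem_left _ (hy _ _ _ _ adj12 adj01)))
    (I.mul_mem_left _ (hy _ _ _ _ adj12 adj12))

def pathCopies (ι : Type*) : SimpleGraph (ι × Fin 3) := (⊥ : SimpleGraph ι) □ pathGraph 3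

lemma pathCopies_adj {ι : Type*} {x y : ι × Fin 3} :
    (pathCopies ι).Adj x y ↔ x.1 = y.1 ∧ (pathGraph 3).Adj x.2 y.2 := by
  simp [pathCopies, boxProd_adj, and_comm]

section InducedPaths

variable {V ι : Type*} {G : SimpleGraph V}

def IsInducedPath (G : SimpleGraph V) (a b c : V) : Prop :=
  G.Adj a b ∧ G.Adj b c ∧ ¬ G.Adj a c ∧ a ≠ c

noncomputable def IsInducedPath.embedding {a b c : V} (h : IsInducedPath G a b c) :
    pathGraph 3 ↪g G where
  toFun := ![a, b, c]
  inj' := by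
    obtain ⟨hab, hbc, -, hac⟩ := h
    intro x y hxy
    fin_cases x <;> fin_cases y <;> simp_all [hab.ne, hbc.ne, hab.ne.symm, hbc.ne.symm, hac.symm]
  map_rel_iff' := by
    obtain ⟨hab, hbc, hnac, -⟩ := h
    intro x y
    fin_cases x <;> fin_cases y <;> simp_all [pathGraph_adj, hab.symm, hbc.symm, G.adj_comm c a]

lemma connectedComponentMk_pathGraph_embedding (e : pathGraph 3 ↪g G) (ρ : Fin 3) :
    G.connectedComponentMk (e ρ) = G.connectedComponentMk (e 0) :=
  ConnectedComponent.sound (((pathGraph_connected 2).preconnected ρ 0).map e.toHom)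

lemma nonempty_pathCopies_embedding (C : ι → G.ConnectedComponent) (hC : Injective C)
    (h : ∀ i, ∃ a b c, G.connectedComponentMk a = C i ∧ IsInducedPath G a b c) :
    Nonempty (pathCopies ι ↪g G) := by
  choose a b c ha hpath using h
  let p i := (hpath i).embedding
  have hp i ρ : G.connectedComponentMk (p i ρ) = C i := by
    rw [connectedComponentMk_pathGraph_embedding]; exact ha i
  refine ⟨{ toFun x := p x.1 x.2, inj' := ?_, map_rel_iff' := ?_ }⟩
  · rintro ⟨i, ρ⟩ ⟨j, σ⟩ (h : p i ρ = p j σ)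
    obtain rfl : i = j := hC (by rw [← hp i ρ, ← hp j σ, h])
    rw [(p i).injective h]
  · rintro ⟨i, ρ⟩ ⟨j, σ⟩
    change G.Adj (p i ρ) (p j σ) ↔ _
    rw [pathCopies_adj]
    refine ⟨fun h ↦ ?_, fun ⟨hij, h⟩ ↦ ?_⟩
    · obtain rfl : i = j :=
        hC (by rw [← hp i ρ, ← hp j σ]; exact ConnectedComponent.sound h.reachable)
      exact ⟨rfl, (p i).map_rel_iff.1 h⟩
    · obtain rfl : i = j := hij
      exact (p i).map_rel_iff.2 h

end InducedPaths

/-- The permutations reachable from `1` by the moves `τ ↦ τ * swap ρ ρ'` with `ρ, ρ'` and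
`τ ρ, τ ρ'` adjacent in the path (see `mul_swap_mem_pathPerms`); `swap 0 2` is not among them. -/
def pathPerms : Finset (Perm (Fin 3)) := {1, swap 0 1, swap 1 2}

lemma swap_zero_two_notMem_pathPerms : swap (0 : Fin 3) 2 ∉ pathPerms := by decide

lemma mul_swap_mem_pathPerms {τ : Perm (Fin 3)} (hτ : τ ∈ pathPerms) {ρ ρ' : Fin 3}
    (hρ : (pathGraph 3).Adj ρ ρ') (hτρ : (pathGraph 3).Adj (τ ρ) (τ ρ')) :
    τ * swap ρ ρ' ∈ pathPerms := by
  rw [pathGraph_adj] at hρ hτρ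
  revert τ ρ ρ'
  decide

lemma Fintype.sum_apply_swap_add {X M : Type*} [Fintype X] [DecidableEq X] [AddCommMonoid M]
    (g : X → X → M) {a b : X} (hab : a ≠ b) :
    ∑ x, g x (swap a b x) + (g a a + g b b) = ∑ x, g x x + (g a b + g b a) := by
  have split (h : X → M) : ∑ x, h x = h a + h b + ∑ x ∈ (univ.erase a).erase b, h x := by
    rw [add_assoc, add_sum_erase _ _ (mem_erase.2 ⟨hab.symm, mem_univ b⟩),
      add_sum_erase _ _ (mem_univ a)]
  have rest : ∀ x ∈ (univ.erase a).erase b, g x (swap a b x) = g x x := fun x hx ↦ by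
    rw [swap_apply_of_ne_of_ne (ne_of_mem_erase (mem_of_mem_erase hx)) (ne_of_mem_erase hx)]
  simp only [split]
  rw [Finset.sum_congr rfl rest, swap_apply_left, swap_apply_right]
  abel

noncomputable section BlockMonomials

variable {α β ι κ : Type*} {G₁ : SimpleGraph α} {G₂ : SimpleGraph β}
  (e₁ : pathCopies ι ↪g G₁) (e₂ : pathCopies κ ↪g G₂)

/-- The exponent of `∏ ρ, x (e₁ (i, ρ), e₂ (j, τ ρ))`: the permutation matrix of `τ` placed on the
block of the paths `i` and `j`. -/
def blockTerm (k : ι × κ) (τ : Perm (Fin 3)) : α × β →₀ ℕ :=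
  ∑ ρ, Finsupp.single (e₁ (k.1, ρ), e₂ (k.2, τ ρ)) 1

lemma blockTerm_mul_swap (k : ι × κ) (τ : Perm (Fin 3)) {ρ ρ' : Fin 3} (hρ : ρ ≠ ρ') :
    blockTerm e₁ e₂ k (τ * swap ρ ρ') + (Finsupp.single (e₁ (k.1, ρ), e₂ (k.2, τ ρ)) 1
      + Finsupp.single (e₁ (k.1, ρ'), e₂ (k.2, τ ρ')) 1)
    = blockTerm e₁ e₂ k τ + (Finsupp.single (e₁ (k.1, ρ), e₂ (k.2, τ ρ')) 1
      + Finsupp.single (e₁ (k.1, ρ'), e₂ (k.2, τ ρ)) 1) :=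
  Fintype.sum_apply_swap_add (fun x y ↦ Finsupp.single (e₁ (k.1, x), e₂ (k.2, τ y)) 1) hρ

variable [Fintype ι] [Fintype κ]

def blockMonomial (π : ι × κ → Perm (Fin 3)) : α × β →₀ ℕ :=
  ∑ k, blockTerm e₁ e₂ k (π k)

def blockSet : Set (α × β →₀ ℕ) :=
  blockMonomial e₁ e₂ '' {π | ∀ k, π k ∈ pathPerms}

variable {e₁ e₂}

lemma blockMonomial_apply (π : ι × κ → Perm (Fin 3)) (i : ι) (ρ : Fin 3) (j : κ) (σ : Fin 3) :
    blockMonomial e₁ e₂ π (e₁ (i, ρ), e₂ (j, σ)) = if π (i, j) ρ = σ then 1 else 0 := by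
  classical
  simp only [blockMonomial, blockTerm, Finsupp.finsetSum_apply]
  rw [Fintype.sum_eq_single (i, j) fun k hk ↦ sum_eq_zero fun ρ' _ ↦ ?_,
    Fintype.sum_eq_single ρ fun ρ' hρ' ↦ ?_]
  · simp [Finsupp.single_apply]
  · simp [e₁.injective.eq_iff, hρ']
  · simp only [Finsupp.single_apply, Prod.mk.injEq, e₁.injective.eq_iff, e₂.injective.eq_iff]
    grind

lemma blockMonomial_injective : Injective (blockMonomial e₁ e₂) := by
  intro π π' h
  funext k
  refine Equiv.ext fun ρ ↦ ?_
  have := blockMonomial_apply (e₁ := e₁) (e₂ := e₂) π' k.1 ρ k.2 (π k ρ)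
  rw [← h, blockMonomial_apply, if_pos rfl] at this
  simpa [eq_comm] using this

lemma blockMonomial_mem_blockSet_iff {π : ι × κ → Perm (Fin 3)} :
    blockMonomial e₁ e₂ π ∈ blockSet e₁ e₂ ↔ ∀ k, π k ∈ pathPerms :=
  blockMonomial_injective.mem_set_image

lemma exists_eq_of_blockMonomial_apply_ne_zero {π : ι × κ → Perm (Fin 3)} {w : α × β}
    (hw : blockMonomial e₁ e₂ π w ≠ 0) : ∃ i ρ j, w = (e₁ (i, ρ), e₂ (j, π (i, j) ρ)) := by
  simp only [blockMonomial, blockTerm, Finsupp.finsetSum_apply] at hw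
  obtain ⟨⟨i, j⟩, -, hk⟩ := exists_ne_zero_of_sum_ne_zero hw
  obtain ⟨ρ, -, hρ⟩ := exists_ne_zero_of_sum_ne_zero hk
  exact ⟨i, ρ, j, by simpa using (Finsupp.single_apply_ne_zero.1 hρ).1⟩

lemma blockMonomial_update_mul_swap [DecidableEq ι] [DecidableEq κ] (π : ι × κ → Perm (Fin 3))
    (k : ι × κ) {ρ ρ' : Fin 3} (hρ : ρ ≠ ρ') :
    blockMonomial e₁ e₂ (update π k (π k * swap ρ ρ'))
      + (Finsupp.single (e₁ (k.1, ρ), e₂ (k.2, π k ρ)) 1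
        + Finsupp.single (e₁ (k.1, ρ'), e₂ (k.2, π k ρ')) 1)
    = blockMonomial e₁ e₂ π + (Finsupp.single (e₁ (k.1, ρ), e₂ (k.2, π k ρ')) 1
      + Finsupp.single (e₁ (k.1, ρ'), e₂ (k.2, π k ρ)) 1) := by
  have rest : ∀ k' ∈ univ.erase k, blockTerm e₁ e₂ k' (update π k (π k * swap ρ ρ') k')
      = blockTerm e₁ e₂ k' (π k') := fun k' hk' ↦ by rw [update_of_ne (ne_of_mem_erase hk')]
  simp only [blockMonomial, ← add_sum_erase _ _ (mem_univ k), update_self, sum_congr rfl rest]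
  rw [add_right_comm, blockTerm_mul_swap e₁ e₂ k _ hρ, add_right_comm]

end BlockMonomials

section BinomialEdgeIdeal

variable {K : Type} [Field K] {α β : Type} {ι κ : Type*}
  {G₁ : SimpleGraph α} {G₂ : SimpleGraph β} {e₁ : pathCopies ι ↪g G₁} {e₂ : pathCopies κ ↪g G₂}

variable (K e₁ e₂) in
noncomputable def blockMinor (k : ι × κ) : MvPolynomial (α × β) K :=
  centralMinor fun ρ σ ↦ X (e₁ (k.1, ρ), e₂ (k.2, σ))

lemma blockMinor_mem_radical (k : ι × κ) :
    blockMinor K e₁ e₂ k ∈ (pairIdeal K G₁ G₂).radical :=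
  ⟨2, centralMinor_sq_mem fun ρ ρ' σ σ' hρ hσ ↦ Ideal.subset_span
    ⟨e₁ (k.1, ρ), e₁ (k.1, ρ'), e₂ (k.2, σ), e₂ (k.2, σ'),
      e₁.map_rel_iff.2 (pathCopies_adj.2 ⟨rfl, hρ⟩), e₂.map_rel_iff.2 (pathCopies_adj.2 ⟨rfl, hσ⟩),
      rfl⟩⟩

lemma blockMinor_eq_sum (k : ι × κ) :
    blockMinor K e₁ e₂ k
      = ∑ τ ∈ {1, swap 0 2}, monomial (blockTerm e₁ e₂ k τ) (Perm.sign τ : K) := by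
  rw [sum_pair (by decide)]
  simp [blockMinor, centralMinor, blockTerm, Fin.sum_univ_three, monomial_add_single,
    ← C_mul_X_pow_eq_monomial, swap_apply_of_ne_of_ne]
  ring

variable [Fintype ι] [Fintype κ]

lemma add_single_add_single_mem_blockSet {μ : α × β →₀ ℕ} {u u' : α} {v v' : β}
    (hu : G₁.Adj u u') (hv : G₂.Adj v v')
    (hμ : μ + (Finsupp.single (u, v) 1 + Finsupp.single (u', v') 1) ∈ blockSet e₁ e₂) :
    μ + (Finsupp.single (u, v') 1 + Finsupp.single (u', v) 1) ∈ blockSet e₁ e₂ := by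
  classical
  obtain ⟨π, hπ, hμπ⟩ := hμ
  obtain ⟨i, ρ, j, rfl, rfl⟩ :=
    exists_eq_of_blockMonomial_apply_ne_zero (w := (u, v)) (by rw [hμπ]; simp)
  obtain ⟨i', ρ', j', rfl, rfl⟩ :=
    exists_eq_of_blockMonomial_apply_ne_zero (w := (u', v')) (by rw [hμπ]; simp)
  obtain ⟨rfl, hρ⟩ := pathCopies_adj.1 (e₁.map_rel_iff.1 hu)
  obtain ⟨rfl, hσ⟩ := pathCopies_adj.1 (e₂.map_rel_iff.1 hv)
  dsimp only at hρ hσ hμπ ⊢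
  refine ⟨update π (i, j) (π (i, j) * swap ρ ρ'), fun k ↦ ?_, ?_⟩
  · rcases eq_or_ne k (i, j) with rfl | hk
    · rw [update_self]
      exact mul_swap_mem_pathPerms (hπ _) hρ hσ
    · rw [update_of_ne hk]
      exact hπ k
  · refine add_right_cancel (b := Finsupp.single (e₁ (i, ρ), e₂ (j, π (i, j) ρ)) 1
      + Finsupp.single (e₁ (i, ρ'), e₂ (j, π (i, j) ρ')) 1) ?_
    rw [blockMonomial_update_mul_swap π (i, j) hρ.ne, hμπ]
    abel

lemma coeffSum_blockSet_eq_zero_of_mem_pairIdeal {f : MvPolynomial (α × β) K}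
    (hf : f ∈ pairIdeal K G₁ G₂) : coeffSum (blockSet e₁ e₂) f = 0 := by
  refine coeffSum_eq_zero_of_mem_span ?_ hf
  rintro _ ⟨u, u', v, v', hu, hv, rfl⟩
  refine ⟨Finsupp.single (u, v) 1 + Finsupp.single (u', v') 1,
    Finsupp.single (u, v') 1 + Finsupp.single (u', v) 1,
    by simp only [X, monomial_mul, mul_one], fun μ ↦
      ⟨add_single_add_single_mem_blockSet hu hv, add_single_add_single_mem_blockSet hu hv.symm⟩⟩

lemma coeffSum_prod_blockMinor : coeffSum (blockSet e₁ e₂) (∏ k, blockMinor K e₁ e₂ k) = 1 := by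
  classical
  simp_rw [blockMinor_eq_sum, prod_univ_sum, ← monomial_sum_prod]
  change coeffSum _ (∑ π ∈ _, monomial (blockMonomial e₁ e₂ π) _) = 1
  rw [map_sum, sum_eq_single 1]
  · simp [coeffSum_monomial, blockMonomial_mem_blockSet_iff, pathPerms]
  · intro π hπ hπ1
    obtain ⟨k, hk⟩ := Function.ne_iff.1 hπ1
    have hswap : π k = swap 0 2 := by
      have := Fintype.mem_piFinset.1 hπ k
      simp_all
    rw [coeffSum_monomial, Set.indicator_of_notMem (mt blockMonomial_mem_blockSet_iff.1 fun h ↦ ?_)]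
    exact swap_zero_two_notMem_pathPerms (hswap ▸ h k)
  · simp

end BinomialEdgeIdeal

theorem not_radical_pow_le_pairIdeal (K : Type) [Field K] {α β : Type} {ι κ : Type*} [Fintype ι]
    [Fintype κ] {G₁ : SimpleGraph α} {G₂ : SimpleGraph β}
    (e₁ : pathCopies ι ↪g G₁) (e₂ : pathCopies κ ↪g G₂) :
    ¬ (pairIdeal K G₁ G₂).radical ^ (Fintype.card ι * Fintype.card κ) ≤ pairIdeal K G₁ G₂ := by
  intro hle
  have hmem : ∏ k, blockMinor K e₁ e₂ k
      ∈ (pairIdeal K G₁ G₂).radical ^ (Fintype.card ι * Fintype.card κ) := by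
    simpa using Ideal.prod_mem_prod (s := univ) fun k _ ↦
      blockMinor_mem_radical (e₁ := e₁) (e₂ := e₂) k
  have := coeffSum_blockSet_eq_zero_of_mem_pairIdeal (e₁ := e₁) (e₂ := e₂) (hle hmem)
  rw [coeffSum_prod_blockMinor] at this
  exact one_ne_zero this

/-- If `r` connected components of the induced subgraph of `G₁` on `V(G₁) \ T₁` and
`s` connected components of the induced subgraph of `G₂` on `V(G₂) \ T₂` each contain
an induced path of length 2, then `(√J_{G₁,G₂})^{rs} ⊄ J_{G₁,G₂}`, i.e.
`nilpot(J_{G₁,G₂}) ≥ rs + 1`. -/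
theorem stmt16 (K : Type) [Field K] (m n : ℕ)
    (G1 : SimpleGraph (Fin m)) (G2 : SimpleGraph (Fin n))
    (T1 : Set (Fin m)) (T2 : Set (Fin n)) (r s : ℕ)
    (C1 : Fin r → (G1.induce T1ᶜ).ConnectedComponent) (hC1 : Function.Injective C1)
    (h1 : ∀ i : Fin r, ∃ a b c : ↥T1ᶜ,
      (G1.induce T1ᶜ).connectedComponentMk a = C1 i ∧
      (G1.induce T1ᶜ).Adj a b ∧ (G1.induce T1ᶜ).Adj b c ∧
      ¬ (G1.induce T1ᶜ).Adj a c ∧ a ≠ c)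
    (C2 : Fin s → (G2.induce T2ᶜ).ConnectedComponent) (hC2 : Function.Injective C2)
    (h2 : ∀ i : Fin s, ∃ a b c : ↥T2ᶜ,
      (G2.induce T2ᶜ).connectedComponentMk a = C2 i ∧
      (G2.induce T2ᶜ).Adj a b ∧ (G2.induce T2ᶜ).Adj b c ∧
      ¬ (G2.induce T2ᶜ).Adj a c ∧ a ≠ c) :
    ¬ ((pairIdeal K G1 G2).radical ^ (r * s) ≤ pairIdeal K G1 G2) := by
  obtain ⟨e₁⟩ := nonempty_pathCopies_embedding C1 hC1 h1
  obtain ⟨e₂⟩ := nonempty_pathCopies_embedding C2 hC2 h2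
  simpa using not_radical_pow_le_pairIdeal K ((Embedding.induce T1ᶜ).comp e₁)
    ((Embedding.induce T2ᶜ).comp e₂)
end

section
/- Let $J$ be the ideal of adjacent $2$-minors of an $m\times n$ generic matrix over a field, with $m=4k+p$, $n=4l+q$, $0\le p,q<4$. Then $(\sqrt J)^{N}\not\subset J$ where $N=(k+\lfloor p/3\rfloor)(l+\lfloor q/3\rfloor)$; equivalently, $\mathrm{nilpot}(J)\geq N+1$. -/
open MvPolynomial

/-!
For a block `(r, c)` with `4r + 2 < m` and `4c + 2 < n`, the binomial
`f = x₀₀ x₁₁ x₂₂ - x₀₂ x₁₁ x₂₀` of the 3 × 3 window at `(4r, 4c)` satisfies `f² ∈ J`, being a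
combination of the four adjacent minors of the window. There are `N` such blocks, so the
product `u` of their binomials lies in `(√J)^N`.

To see `u ∉ J`, substitute for the variables monomials in new variables `s_z, t_z`, one pair per
block `z`: a fixed 3 × 3 pattern in every 4 × 4 block, and zero on every fourth row and column.
Every adjacent minor then lands in the monomial ideal `Q = (s_z t_z³, s_z³ t_z)`, while `u` maps
to `∏ (s_z³ t_z³ - s_z² t_z²)`, whose monomial `∏ s_z² t_z²` has coefficient `±1` and is
divisible by no generator of `Q`.
-/

namespace AdjacentMinors

section Matrix

variable {A : Type*} [CommRing A]

def adjMinor (x : ℕ → ℕ → A) (i j : ℕ) : A :=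
  x i j * x (i + 1) (j + 1) - x i (j + 1) * x (i + 1) j

def diagBinomial (x : ℕ → ℕ → A) (i j : ℕ) : A :=
  x i j * x (i + 1) (j + 1) * x (i + 2) (j + 2) - x i (j + 2) * x (i + 1) (j + 1) * x (i + 2) j

theorem diagBinomial_sq_mem {I : Ideal A} {x : ℕ → ℕ → A} (hx : ∀ i j, adjMinor x i j ∈ I)
    (i j : ℕ) : diagBinomial x i j ^ 2 ∈ I := by
  have key : diagBinomial x i j ^ 2 =
      (x i j * x (i + 1) (j + 2) * x (i + 2) (j + 1) * x (i + 2) (j + 2)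
          - x i (j + 2) * x (i + 1) (j + 2) * x (i + 2) j * x (i + 2) (j + 1))
          * adjMinor x i j
        + (2 * x i j * x (i + 1) (j + 1) * x (i + 2) j * x (i + 2) (j + 2)
          - x i (j + 2) * x (i + 1) (j + 1) * x (i + 2) j ^ 2
          - x i j * x (i + 1) (j + 2) * x (i + 2) j * x (i + 2) (j + 1))
          * adjMinor x i (j + 1)
        + (x i j * x i (j + 1) * x (i + 1) (j + 2) * x (i + 2) (j + 2)
          - x i (j + 1) * x i (j + 2) * x (i + 1) (j + 2) * x (i + 2) j)
          * adjMinor x (i + 1) j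
        + (x i j ^ 2 * x (i + 1) (j + 1) * x (i + 2) (j + 2)
          - x i j * x i (j + 1) * x (i + 1) (j + 2) * x (i + 2) j)
          * adjMinor x (i + 1) (j + 1) := by
    simp only [diagBinomial, adjMinor]
    ring
  rw [key]
  refine add_mem (add_mem (add_mem ?_ ?_) ?_) ?_ <;> exact I.mul_mem_left _ (hx _ _)

theorem diagBinomial_mem_radical {I : Ideal A} {x : ℕ → ℕ → A} (hx : ∀ i j, adjMinor x i j ∈ I)
    (i j : ℕ) : diagBinomial x i j ∈ I.radical :=
  ⟨2, diagBinomial_sq_mem hx i j⟩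

end Matrix

section PathGraphs

variable (K : Type) [Field K] (m n : ℕ)

-- Zero outside the matrix, so that adjacent minors reaching past the border vanish.
noncomputable def matrixVar (i j : ℕ) : MvPolynomial (Fin m × Fin n) K :=
  if h : i < m ∧ j < n then X (⟨i, h.1⟩, ⟨j, h.2⟩) else 0

theorem adjMinor_matrixVar_mem (i j : ℕ) :
    adjMinor (matrixVar K m n) i j
      ∈ pairIdeal K (SimpleGraph.pathGraph m) (SimpleGraph.pathGraph n) := by
  by_cases h : i + 1 < m ∧ j + 1 < n
  · apply Ideal.subset_span
    refine ⟨⟨i, by omega⟩, ⟨i + 1, h.1⟩, ⟨j, by omega⟩, ⟨j + 1, h.2⟩,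
      SimpleGraph.pathGraph_adj.mpr (Or.inl rfl), SimpleGraph.pathGraph_adj.mpr (Or.inl rfl), ?_⟩
    simp only [adjMinor, matrixVar]
    rw [dif_pos (by omega), dif_pos (by omega), dif_pos (by omega), dif_pos (by omega)]
  · have : matrixVar K m n (i + 1) (j + 1) = 0 ∧ matrixVar K m n (i + 1) j = 0
        ∨ matrixVar K m n (i + 1) (j + 1) = 0 ∧ matrixVar K m n i (j + 1) = 0 := by
      simp only [matrixVar]
      by_cases hi : i + 1 < m
      · right; constructor <;> rw [dif_neg (by omega)]
      · left; constructor <;> rw [dif_neg (by omega)]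
    rcases this with ⟨h1, h2⟩ | ⟨h1, h2⟩ <;> simp [adjMinor, h1, h2]

variable {K m n}

theorem aeval_matrixVar {S : Type*} [CommRing S] [Algebra K S] (f : ℕ → ℕ → S) {i j : ℕ}
    (hi : i < m) (hj : j < n) :
    aeval (fun x : Fin m × Fin n => f x.1 x.2) (matrixVar K m n i j) = f i j := by
  rw [matrixVar, dif_pos ⟨hi, hj⟩, aeval_X]

theorem aeval_diagBinomial_matrixVar {S : Type*} [CommRing S] [Algebra K S] (f : ℕ → ℕ → S)
    {i j : ℕ} (hi : i + 2 < m) (hj : j + 2 < n) :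
    aeval (fun x : Fin m × Fin n => f x.1 x.2) (diagBinomial (matrixVar K m n) i j)
      = diagBinomial f i j := by
  simp (disch := omega) only [diagBinomial, map_sub, map_mul, aeval_matrixVar]

theorem pairIdeal_pathGraph_le_comap {S : Type*} [CommRing S] [Algebra K S] (f : ℕ → ℕ → S)
    {I : Ideal S} (hf : ∀ i j, adjMinor f i j ∈ I) :
    pairIdeal K (SimpleGraph.pathGraph m) (SimpleGraph.pathGraph n)
      ≤ I.comap (aeval fun x : Fin m × Fin n => f x.1 x.2) := by
  rw [pairIdeal, Ideal.span_le]
  rintro _ ⟨i, i', j, j', hi, hj, rfl⟩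
  simp only [SetLike.mem_coe, Ideal.mem_comap, map_sub, map_mul, aeval_X]
  rw [SimpleGraph.pathGraph_adj] at hi hj
  rcases hi with hi | hi <;> rcases hj with hj | hj
  · simpa [adjMinor, ← hi, ← hj] using hf i j
  · convert I.neg_mem (hf i j') using 1
    simp only [adjMinor, ← hi, ← hj]; ring
  · convert I.neg_mem (hf i' j) using 1
    simp only [adjMinor, ← hi, ← hj]; ring
  · convert hf i' j' using 1
    simp only [adjMinor, ← hi, ← hj]; ring

end PathGraphs

section CornerIdeal

open Finsupp

variable (ι R : Type*) [CommRing R]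

def cornerExponents : Set (ι × Bool →₀ ℕ) :=
  {d | ∃ z, d = single (z, false) 1 + single (z, true) 3 ∨
    d = single (z, false) 3 + single (z, true) 1}

noncomputable def cornerIdeal : Ideal (MvPolynomial (ι × Bool) R) :=
  Ideal.span ((fun d => monomial d 1) '' cornerExponents ι)

variable {ι R}

theorem X_pow_mul_X_pow_mem_cornerIdeal (z : ι) {a b : ℕ} (h : 1 ≤ a ∧ 3 ≤ b ∨ 3 ≤ a ∧ 1 ≤ b) :
    (X (z, false) ^ a * X (z, true) ^ b : MvPolynomial (ι × Bool) R) ∈ cornerIdeal ι R := by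
  rw [cornerIdeal, mem_ideal_span_monomial_image]
  intro d hd
  rw [X_pow_eq_monomial, X_pow_eq_monomial, monomial_mul, one_mul] at hd
  obtain rfl := Finset.mem_singleton.mp (support_monomial_subset hd)
  rcases h with h | h
  · refine ⟨_, ⟨z, Or.inl rfl⟩, ?_⟩
    exact add_le_add (single_le_single.mpr h.1) (single_le_single.mpr h.2)
  · refine ⟨_, ⟨z, Or.inr rfl⟩, ?_⟩
    exact add_le_add (single_le_single.mpr h.1) (single_le_single.mpr h.2)

theorem notMem_cornerIdeal_of_coeff_ne_zero {f : MvPolynomial (ι × Bool) R} {μ : ι × Bool →₀ ℕ}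
    (hμ : ∀ w, μ w ≤ 2) (hf : coeff μ f ≠ 0) : f ∉ cornerIdeal ι R := by
  rw [cornerIdeal, mem_ideal_span_monomial_image]
  intro h
  obtain ⟨d, ⟨z, hd | hd⟩, hle⟩ := h μ (MvPolynomial.mem_support_iff.mpr hf)
  · have := (hle (z, true)).trans (hμ (z, true))
    simp [hd] at this
  · have := (hle (z, false)).trans (hμ (z, false))
    simp [hd] at this

theorem coeff_prod_pow_three_sub_sq (B : Finset ι) :
    coeff (∑ z ∈ B, (single (z, false) 2 + single (z, true) 2))
      (∏ z ∈ B, (X (z, false) ^ 3 * X (z, true) ^ 3 - X (z, false) ^ 2 * X (z, true) ^ 2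
        : MvPolynomial (ι × Bool) R)) = (-1) ^ B.card := by
  have hfactor : ∀ z : ι, (X (z, false) ^ 3 * X (z, true) ^ 3 - X (z, false) ^ 2 * X (z, true) ^ 2
      : MvPolynomial (ι × Bool) R)
      = monomial (single (z, false) 2 + single (z, true) 2) 1
        * (X (z, false) * X (z, true) - 1) := by
    intro z
    rw [← one_mul (1 : R), ← monomial_mul, ← X_pow_eq_monomial, ← X_pow_eq_monomial]
    ring
  rw [Finset.prod_congr rfl fun z _ => hfactor z, Finset.prod_mul_distrib, ← monomial_sum_one,
    coeff_monomial_mul', if_pos le_rfl, one_mul, tsub_self, ← constantCoeff_eq, map_prod]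
  simp

theorem prod_pow_three_sub_sq_notMem_cornerIdeal [Nontrivial R] (B : Finset ι) :
    (∏ z ∈ B, (X (z, false) ^ 3 * X (z, true) ^ 3 - X (z, false) ^ 2 * X (z, true) ^ 2
      : MvPolynomial (ι × Bool) R)) ∉ cornerIdeal ι R := by
  classical
  refine notMem_cornerIdeal_of_coeff_ne_zero
    (μ := ∑ z ∈ B, (single (z, false) 2 + single (z, true) 2)) (fun ⟨z₀, b⟩ => ?_) ?_
  · have hterm : ∀ z ∈ B, (single (z, false) 2 + single (z, true) 2 : ι × Bool →₀ ℕ) (z₀, b)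
        = if z = z₀ then 2 else 0 := by
      intro z _
      cases b <;> simp [single_apply, Prod.ext_iff]
    rw [Finsupp.finsetSum_apply, Finset.sum_congr rfl hterm, Finset.sum_ite_eq']
    split_ifs <;> omega
  · rw [coeff_prod_pow_three_sub_sq]
    exact (isUnit_one.neg.pow _).ne_zero

end CornerIdeal

section BlockAssignment

variable {ι R : Type*} [CommRing R]

noncomputable def blockEntry (z : ι) : ℕ → ℕ → MvPolynomial (ι × Bool) R
  | 0, 0 => X (z, true)
  | 0, 1 => X (z, true)
  | 0, 2 => 1
  | 1, 0 => X (z, false) * X (z, true) ^ 2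
  | 1, 1 => X (z, false) ^ 2 * X (z, true) ^ 2
  | 1, 2 => X (z, false) ^ 2 * X (z, true)
  | 2, 0 => 1
  | 2, 1 => X (z, false)
  | 2, 2 => X (z, false)
  | _, _ => 0

theorem blockEntry_three_left (z : ι) (v : ℕ) : blockEntry (R := R) z 3 v = 0 := by
  rcases v with _ | _ | _ | v <;> rfl

theorem blockEntry_three_right (z : ι) (u : ℕ) : blockEntry (R := R) z u 3 = 0 := by
  rcases u with _ | _ | _ | u <;> rfl

theorem adjMinor_blockEntry_mem (z : ι) {u v : ℕ} (hu : u < 3) (hv : v < 3) :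
    adjMinor (blockEntry z) u v ∈ cornerIdeal ι R := by
  have h00 : adjMinor (blockEntry (R := R) z) 0 0
      = X (z, false) ^ 2 * X (z, true) ^ 3 - X (z, false) ^ 1 * X (z, true) ^ 3 := by
    simp only [adjMinor, blockEntry]; ring
  have h11 : adjMinor (blockEntry (R := R) z) 1 1
      = X (z, false) ^ 3 * X (z, true) ^ 2 - X (z, false) ^ 3 * X (z, true) ^ 1 := by
    simp only [adjMinor, blockEntry]; ring
  -- Only the minors at `(0, 0)` and `(1, 1)` are nonzero.
  interval_cases u <;> interval_cases v <;> first
    | rw [h00]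
      exact sub_mem (X_pow_mul_X_pow_mem_cornerIdeal z (by omega))
        (X_pow_mul_X_pow_mem_cornerIdeal z (by omega))
    | rw [h11]
      exact sub_mem (X_pow_mul_X_pow_mem_cornerIdeal z (by omega))
        (X_pow_mul_X_pow_mem_cornerIdeal z (by omega))
    | convert (cornerIdeal ι R).zero_mem using 1
      simp only [adjMinor, blockEntry]
      ring

-- Rows and columns `≡ 3 (mod 4)` are zero, which decouples the blocks.
noncomputable def blockAssignment (i j : ℕ) : MvPolynomial ((ℕ × ℕ) × Bool) R :=
  blockEntry (i / 4, j / 4) (i % 4) (j % 4)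

theorem adjMinor_blockAssignment_mem (i j : ℕ) :
    adjMinor blockAssignment i j ∈ cornerIdeal (ℕ × ℕ) R := by
  by_cases hi : i % 4 = 3
  · simp [adjMinor, blockAssignment, hi, blockEntry_three_left]
  by_cases hj : j % 4 = 3
  · simp [adjMinor, blockAssignment, hj, blockEntry_three_right]
  have hi' : (i + 1) / 4 = i / 4 ∧ (i + 1) % 4 = i % 4 + 1 := by omega
  have hj' : (j + 1) / 4 = j / 4 ∧ (j + 1) % 4 = j % 4 + 1 := by omega
  simpa only [adjMinor, blockAssignment, hi', hj']
    using adjMinor_blockEntry_mem (i / 4, j / 4) (by omega) (by omega)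

theorem diagBinomial_blockAssignment (r c : ℕ) :
    diagBinomial (blockAssignment (R := R)) (4 * r) (4 * c)
      = X ((r, c), false) ^ 3 * X ((r, c), true) ^ 3
        - X ((r, c), false) ^ 2 * X ((r, c), true) ^ 2 := by
  simp only [diagBinomial, blockAssignment, Nat.mul_div_cancel_left _ four_pos, Nat.mul_mod_right,
    Nat.mul_add_div four_pos, Nat.mul_add_mod_self_left, Nat.reduceDiv, Nat.reduceMod, add_zero,
    blockEntry]
  ring

end BlockAssignment

end AdjacentMinors

open AdjacentMinors in
/-- For the ideal `J` of adjacent 2-minors of an `m × n` generic matrix (the binomial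
edge ideal of the pair of path graphs), with `m = 4k + p`, `n = 4l + q`, `0 ≤ p,q < 4`,
one has `(√J)^N ⊄ J` for `N = (k + ⌊p/3⌋)(l + ⌊q/3⌋)`. -/
theorem stmt17 (K : Type) [Field K] (m n k l p q : ℕ)
    (hp : p < 4) (hq : q < 4) (hm : m = 4 * k + p) (hn : n = 4 * l + q) :
    ¬ ((pairIdeal K (SimpleGraph.pathGraph m) (SimpleGraph.pathGraph n)).radical ^
          ((k + p / 3) * (l + q / 3)) ≤
        pairIdeal K (SimpleGraph.pathGraph m) (SimpleGraph.pathGraph n)) := by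
  intro hle
  set J := pairIdeal K (SimpleGraph.pathGraph m) (SimpleGraph.pathGraph n)
  set B := Finset.range (k + p / 3) ×ˢ Finset.range (l + q / 3)
  have hB : ∀ z ∈ B, 4 * z.1 + 2 < m ∧ 4 * z.2 + 2 < n := by
    intro z hz
    simp only [B, Finset.mem_product, Finset.mem_range] at hz
    omega
  set u := ∏ z ∈ B, diagBinomial (matrixVar K m n) (4 * z.1) (4 * z.2)
  have hu : u ∈ J.radical ^ ((k + p / 3) * (l + q / 3)) := by
    rw [← Finset.card_range (k + p / 3), ← Finset.card_range (l + q / 3), ← Finset.card_product,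
      ← Finset.prod_const]
    exact Ideal.prod_mem_prod fun z _ =>
      diagBinomial_mem_radical (adjMinor_matrixVar_mem K m n) _ _
  have himage : aeval (fun x : Fin m × Fin n => blockAssignment (R := K) x.1 x.2) u
      = ∏ z ∈ B, (X (z, false) ^ 3 * X (z, true) ^ 3 - X (z, false) ^ 2 * X (z, true) ^ 2) := by
    rw [map_prod]
    refine Finset.prod_congr rfl fun z hz => ?_
    rw [aeval_diagBinomial_matrixVar _ (hB z hz).1 (hB z hz).2, diagBinomial_blockAssignment]
  apply prod_pow_three_sub_sq_notMem_cornerIdeal (R := K) B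
  rw [← himage]
  exact pairIdeal_pathGraph_le_comap _ adjMinor_blockAssignment_mem (hle hu)
end
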